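/- arXiv:1504.05823 — 7 statements merged into one kernel-verified Lean document; each statement's English description precedes it below -/
import Mathlib

section
/- Let Z ~ N(0,1) and U ~ χ²_d be independent, with integer d ≥ 2. For all δ > 0, p > 0, and integers k ≥ 1: P(δ + √U·√(k^{2/p} - 1) < Z) ≥ (1/2)·k^{-d/p}·P((1/4)Z² ≥ U ≥ δ²). -/
open ProbabilityTheory MeasureTheory Real Set
open scoped ENNReal

lemma pdfReal_scale_ineq {a r c u : ℝ} (ha : 1 ≤ a) (hr : 0 < r) (hc : 1 ≤ c) :
    c ^ (-a) * gammaPDFReal a r u ≤ c⁻¹ * gammaPDFReal a r (u * c⁻¹) := by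
  have hc0 : (0:ℝ) < c := one_pos.trans_le hc
  unfold gammaPDFReal
  by_cases hu : 0 ≤ u
  · have hu' : 0 ≤ u * c⁻¹ := by positivity
    rw [if_pos hu, if_pos hu']
    have h1 : (u * c⁻¹) ^ (a-1) = u ^ (a-1) * (c ^ (a-1))⁻¹ := by
      rw [Real.mul_rpow hu (by positivity), Real.inv_rpow hc0.le]
    have h2 : Real.exp (-(r * u)) ≤ Real.exp (-(r * (u * c⁻¹))) := by
      apply Real.exp_le_exp.2
      have hci : c⁻¹ ≤ 1 := by rw [← one_div]; exact (div_le_one hc0).2 hc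
      have : u * c⁻¹ ≤ u := mul_le_of_le_one_right hu hci
      nlinarith
    have h3 : c ^ (-a) = c⁻¹ * (c ^ (a-1))⁻¹ := by
      rw [← Real.rpow_neg hc0.le, ← Real.rpow_neg_one c, ← Real.rpow_add hc0]
      ring_nf
    rw [h1, h3]
    have hK : 0 ≤ r ^ a / Real.Gamma a := by
      have := Real.Gamma_pos_of_pos (lt_of_lt_of_le one_pos ha)
      positivity
    have hx : 0 ≤ u ^ (a-1) := Real.rpow_nonneg hu _
    have hci : 0 ≤ (c ^ (a-1))⁻¹ := by positivity
    calc c⁻¹ * (c ^ (a-1))⁻¹ * (r ^ a / Real.Gamma a * u ^ (a-1) * Real.exp (-(r*u)))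
        ≤ c⁻¹ * (c ^ (a-1))⁻¹ * (r ^ a / Real.Gamma a * u ^ (a-1) * Real.exp (-(r*(u * c⁻¹)))) := by
          gcongr
      _ = c⁻¹ * (r ^ a / Real.Gamma a * (u ^ (a-1) * (c ^ (a-1))⁻¹) * Real.exp (-(r*(u * c⁻¹)))) := by
          ring
  · have hu' : ¬ (0 ≤ u * c⁻¹) := by
      rw [not_le] at hu ⊢
      exact mul_neg_of_neg_of_pos hu (by positivity)
    rw [if_neg hu, if_neg hu']
    simp

lemma gamma_scale {a r c : ℝ} (ha : 1 ≤ a) (hr : 0 < r) (hc : 1 ≤ c)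
    {C : Set ℝ} (hC : MeasurableSet C) :
    ENNReal.ofReal (c ^ (-a)) * gammaMeasure a r C
      ≤ gammaMeasure a r ((fun v => c * v) ⁻¹' C) := by
  have hc0 : (0:ℝ) < c := one_pos.trans_le hc
  have hCm : MeasurableSet ((fun v => c * v) ⁻¹' C) := hC.preimage (measurable_const_mul c)
  rw [gammaMeasure, withDensity_apply _ hC, withDensity_apply _ hCm]
  set F : ℝ → ℝ≥0∞ := C.indicator (fun u => gammaPDF a r (u * c⁻¹)) with hF
  have hFm : Measurable F := by
    apply Measurable.indicator _ hC
    exact (measurable_gammaPDFReal a r).comp (measurable_mul_const c⁻¹) |>.ennreal_ofReal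
  have key : ∀ v, ((fun v => c * v) ⁻¹' C).indicator (gammaPDF a r) v = F (c * v) := by
    intro v
    by_cases h : c * v ∈ C
    · rw [Set.indicator_of_mem (by exact h), hF, Set.indicator_of_mem h]
      congr 1
      field_simp
    · rw [Set.indicator_of_notMem (by exact h), hF, Set.indicator_of_notMem h]
  calc ENNReal.ofReal (c ^ (-a)) * ∫⁻ x in C, gammaPDF a r x
      = ∫⁻ x, ENNReal.ofReal (c ^ (-a)) * C.indicator (gammaPDF a r) x := by
        rw [lintegral_const_mul' _ _ ENNReal.ofReal_ne_top, lintegral_indicator hC]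
    _ ≤ ∫⁻ x, ENNReal.ofReal c⁻¹ * F x := by
        apply lintegral_mono
        intro x
        dsimp only
        by_cases h : x ∈ C
        · rw [Set.indicator_of_mem h, hF, Set.indicator_of_mem h, gammaPDF,
            gammaPDF, ← ENNReal.ofReal_mul (by positivity), ← ENNReal.ofReal_mul (by positivity)]
          exact ENNReal.ofReal_le_ofReal (pdfReal_scale_ineq ha hr hc)
        · rw [Set.indicator_of_notMem h, hF, Set.indicator_of_notMem h]
          simp
    _ = ENNReal.ofReal |c⁻¹| * ∫⁻ x, F x := by
        rw [lintegral_const_mul' _ _ ENNReal.ofReal_ne_top, abs_of_pos (by positivity)]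
    _ = ∫⁻ x, F x ∂(Measure.map (fun v => c * v) volume) := by
        rw [Real.map_volume_mul_left hc0.ne']
        simp [lintegral_smul_measure]
    _ = ∫⁻ v, F (c * v) := by
        rw [lintegral_map hFm (measurable_const_mul c)]
    _ = ∫⁻ v, ((fun v => c * v) ⁻¹' C).indicator (gammaPDF a r) v := by
        simp_rw [key]
    _ = ∫⁻ v in (fun v => c * v) ⁻¹' C, gammaPDF a r v := lintegral_indicator hCm _

lemma gauss_map_neg : (gaussianReal 0 1).map (fun x => -x) = gaussianReal 0 1 := by
  have h := gaussianReal_map_const_mul (μ := 0) (v := 1) (-1)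
  simp only [neg_one_mul] at h
  rw [h]
  norm_num

set_option maxHeartbeats 1000000 in
theorem prop1_lower_bound (d : ℕ) (hd : 2 ≤ d) (δ p : ℝ) (hδ : 0 < δ) (hp : 0 < p)
    (k : ℕ) (hk : 1 ≤ k) :
    ((gaussianReal 0 1).prod (gammaMeasure ((d : ℝ) / 2) (1 / 2)))
        {q : ℝ × ℝ | δ + Real.sqrt q.2 * Real.sqrt ((k : ℝ) ^ ((2 : ℝ) / p) - 1) < q.1}
      ≥ ENNReal.ofReal ((1 / 2) * (k : ℝ) ^ (-(d : ℝ) / p))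
        * ((gaussianReal 0 1).prod (gammaMeasure ((d : ℝ) / 2) (1 / 2)))
            {q : ℝ × ℝ | δ ^ 2 ≤ q.2 ∧ q.2 ≤ (1 / 4) * q.1 ^ 2} := by
  have hd1 : (1:ℝ) ≤ (d:ℝ)/2 := by
    have : (2:ℝ) ≤ (d:ℝ) := by exact_mod_cast hd
    linarith
  have hr : (0:ℝ) < 1/2 := by norm_num
  have hk1 : (1:ℝ) ≤ (k:ℝ) := by exact_mod_cast hk
  set c : ℝ := (k:ℝ) ^ ((2:ℝ)/p) with hcdef
  have hc : 1 ≤ c := Real.one_le_rpow hk1 (by positivity)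
  have hc0 : (0:ℝ) < c := one_pos.trans_le hc
  set a : ℝ := (d:ℝ)/2 with hadef
  set ν : Measure ℝ := gammaMeasure a (1/2) with hν
  set γ : Measure ℝ := gaussianReal 0 1 with hγ
  haveI : IsProbabilityMeasure ν := isProbabilityMeasure_gammaMeasure (by linarith) hr
  set A := {q : ℝ × ℝ | δ + Real.sqrt q.2 * Real.sqrt (c - 1) < q.1} with hA
  set B := {q : ℝ × ℝ | δ ^ 2 ≤ q.2 ∧ q.2 ≤ (1/4) * q.1 ^ 2} with hB
  set Bp := {q : ℝ × ℝ | (δ ^ 2 ≤ q.2 ∧ q.2 ≤ (1/4) * q.1 ^ 2) ∧ 0 < q.1} with hBp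
  set Bn := {q : ℝ × ℝ | (δ ^ 2 ≤ q.2 ∧ q.2 ≤ (1/4) * q.1 ^ 2) ∧ q.1 ≤ 0} with hBn
  set S := {q : ℝ × ℝ | 0 < q.1 ∧ δ ^ 2 ≤ c * q.2 ∧ c * q.2 ≤ (1/4) * q.1 ^ 2} with hS
  have mB : MeasurableSet B := by
    apply MeasurableSet.inter
    · exact measurableSet_le measurable_const measurable_snd
    · exact measurableSet_le measurable_snd (by fun_prop)
  have mBp : MeasurableSet Bp := mB.inter (measurableSet_lt measurable_const measurable_fst)
  have mBn : MeasurableSet Bn := mB.inter (measurableSet_le measurable_fst measurable_const)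
  have mS : MeasurableSet S := by
    apply MeasurableSet.inter (measurableSet_lt measurable_const measurable_fst)
    apply MeasurableSet.inter
    · exact measurableSet_le measurable_const (measurable_snd.const_mul c)
    · exact measurableSet_le (measurable_snd.const_mul c) (by fun_prop)
  -- S ⊆ A
  have hSA : S ⊆ A := by
    rintro ⟨z, v⟩ ⟨hz, h1, h2⟩
    simp only [hA, Set.mem_setOf_eq]
    have hv0 : (0:ℝ) ≤ v := by nlinarith
    have hu0 : (0:ℝ) < c * v := lt_of_lt_of_le (by positivity) h1
    have hsq : Real.sqrt (c * v) ≤ z / 2 := by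
      rw [show z/2 = Real.sqrt ((z/2)^2) from (Real.sqrt_sq (by linarith)).symm]
      apply Real.sqrt_le_sqrt; nlinarith
    have hδu : δ ≤ Real.sqrt (c * v) := by
      have := Real.sqrt_le_sqrt h1
      rwa [Real.sqrt_sq hδ.le] at this
    have hs0 : 0 ≤ Real.sqrt v * Real.sqrt (c-1) := by positivity
    have hs2 : (Real.sqrt v * Real.sqrt (c-1))^2 = v * (c-1) := by
      rw [mul_pow, Real.sq_sqrt hv0, Real.sq_sqrt (by linarith)]
    have hvu : v ≤ c * v := by nlinarith
    rcases eq_or_lt_of_le hvu with h|h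
    · have hz0 : Real.sqrt v * Real.sqrt (c-1) = 0 := by
        have h0 : (Real.sqrt v * Real.sqrt (c-1))^2 = 0 := by rw [hs2]; nlinarith
        nlinarith
      rw [hz0]; linarith
    · have hlt : Real.sqrt v * Real.sqrt (c-1) < Real.sqrt (c*v) :=
        (Real.lt_sqrt hs0).2 (by
          have hvpos : 0 < v := by nlinarith
          rw [hs2]; nlinarith)
      linarith
  -- symmetry: measure of Bn = measure of Bp
  have hprodneg : (γ.prod ν).map (Prod.map (fun x : ℝ => -x) (id : ℝ → ℝ)) = γ.prod ν := by
    rw [← Measure.map_prod_map _ _ measurable_neg measurable_id, hγ, gauss_map_neg,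
      Measure.map_id]
  have hBnBp : (γ.prod ν) Bn = (γ.prod ν) Bp := by
    conv_lhs => rw [← hprodneg]
    rw [Measure.map_apply (measurable_neg.prodMap measurable_id) mBn]
    congr 1
    ext ⟨z, v⟩
    simp only [Set.mem_preimage, Prod.map_apply, id_eq, hBn, hBp, Set.mem_setOf_eq]
    constructor
    · rintro ⟨⟨h1, h2⟩, h3⟩
      refine ⟨⟨h1, by nlinarith⟩, ?_⟩
      rcases lt_or_eq_of_le (neg_nonpos.mp h3) with h|h
      · exact h
      · exfalso; nlinarith
    · rintro ⟨⟨h1, h2⟩, h3⟩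
      exact ⟨⟨h1, by nlinarith⟩, by linarith⟩
  have hB2 : (γ.prod ν) B ≤ 2 * (γ.prod ν) Bp := by
    have hsub : B ⊆ Bp ∪ Bn := by
      rintro ⟨z, v⟩ ⟨h1, h2⟩
      rcases le_or_gt z 0 with h|h
      · exact Or.inr ⟨⟨h1, h2⟩, h⟩
      · exact Or.inl ⟨⟨h1, h2⟩, h⟩
    calc (γ.prod ν) B ≤ (γ.prod ν) Bp + (γ.prod ν) Bn :=
          le_trans (measure_mono hsub) (measure_union_le _ _)
      _ = 2 * (γ.prod ν) Bp := by rw [hBnBp]; ring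
  -- slicewise scaling
  have hslice : ∀ z : ℝ, ENNReal.ofReal (c ^ (-a)) * ν (Prod.mk z ⁻¹' Bp)
      ≤ ν (Prod.mk z ⁻¹' S) := by
    intro z
    by_cases hz : 0 < z
    · have h1 : Prod.mk z ⁻¹' Bp = Set.Icc (δ^2) ((1/4)*z^2) := by
        ext v; simp [hBp, hz, Set.mem_Icc]
      have h2 : Prod.mk z ⁻¹' S = (fun v => c * v) ⁻¹' Set.Icc (δ^2) ((1/4)*z^2) := by
        ext v; simp [hS, hz, Set.mem_Icc]
      rw [h1, h2]
      exact gamma_scale hd1 hr hc measurableSet_Icc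
    · have h1 : Prod.mk z ⁻¹' Bp = ∅ := by
        ext v; simp [hBp, hz]
      have h2 : Prod.mk z ⁻¹' S = ∅ := by
        ext v; simp [hS, hz]
      simp [h1, h2]
  have hSBp : ENNReal.ofReal (c ^ (-a)) * (γ.prod ν) Bp ≤ (γ.prod ν) S := by
    rw [Measure.prod_apply mBp, Measure.prod_apply mS,
      ← lintegral_const_mul' _ _ ENNReal.ofReal_ne_top]
    exact lintegral_mono hslice
  -- assemble
  rw [ge_iff_le]
  have hexp : (k:ℝ) ^ (-(d:ℝ)/p) = c ^ (-a) := by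
    rw [hcdef, ← Real.rpow_mul (by positivity : (0:ℝ) ≤ (k:ℝ))]
    congr 1
    rw [hadef]
    field_simp
  calc ENNReal.ofReal ((1/2) * (k:ℝ) ^ (-(d:ℝ)/p)) * (γ.prod ν) B
      = ENNReal.ofReal (c ^ (-a)) * (ENNReal.ofReal (1/2) * (γ.prod ν) B) := by
        rw [← mul_assoc, ← ENNReal.ofReal_mul (by positivity), hexp, mul_comm (1/2 : ℝ)]
    _ ≤ ENNReal.ofReal (c ^ (-a)) * (γ.prod ν) Bp := by
        gcongr
        calc ENNReal.ofReal (1/2) * (γ.prod ν) B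
            ≤ ENNReal.ofReal (1/2) * (2 * (γ.prod ν) Bp) := by gcongr
          _ = (γ.prod ν) Bp := by
              have h12 : ENNReal.ofReal (1/2) * 2 = 1 := by
                rw [show (1/2:ℝ) = (2:ℝ)⁻¹ by norm_num,
                  ENNReal.ofReal_inv_of_pos (by norm_num), ENNReal.ofReal_ofNat]
                exact ENNReal.inv_mul_cancel (by norm_num) (by norm_num)
              rw [← mul_assoc, h12, one_mul]
    _ ≤ (γ.prod ν) S := hSBp
    _ ≤ (γ.prod ν) A := measure_mono hSA
end

section
/- Let Z ~ N(0,1) and U ~ χ²_d be independent, with integer d ≥ 2. For all δ > 0, p > 0, and integers k ≥ 2: P(δ + √U·√(k^{2/p} - 1) < Z) ≤ (e^{-(1+δ²)/2}·p)/(2δ²·√d) · k^{(1-d)/p}/ln k. -/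
open scoped ENNReal NNReal
open ProbabilityTheory MeasureTheory Real Set


lemma aux_xexp_int (t : ℝ) :
    ∫ x in Ioi t, x * Real.exp (-x^2/2) = Real.exp (-t^2/2) := by
  have h : ∀ x ∈ Ici t, HasDerivAt (fun x : ℝ => -Real.exp (-x^2/2))
      (x * Real.exp (-x^2/2)) x := by
    intro x _
    have h1 : HasDerivAt (fun x : ℝ => -x^2/2) (-x) x := by
      have := (hasDerivAt_pow 2 x).neg.div_const 2
      exact this.congr_deriv (by norm_num; ring)
    have := (h1.exp).neg
    exact this.congr_deriv (by ring)
  have hint : IntegrableOn (fun x => x * Real.exp (-x^2/2)) (Ioi t) := by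
    have := (integrable_mul_exp_neg_mul_sq (b := 1/2) (by norm_num)).integrableOn
      (s := Ioi t)
    refine this.congr_fun (fun x _ => ?_) measurableSet_Ioi
    ring_nf
  have htend : Filter.Tendsto (fun x : ℝ => -Real.exp (-x^2/2)) Filter.atTop (nhds 0) := by
    rw [← neg_zero]
    refine Filter.Tendsto.neg ?_
    apply Real.tendsto_exp_atBot.comp
    apply Filter.Tendsto.atBot_div_const (by norm_num)
    exact Filter.tendsto_neg_atBot_iff.mpr (Filter.tendsto_pow_atTop (by norm_num))
  have := MeasureTheory.integral_Ioi_of_hasDerivAt_of_tendsto' h hint htend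
  rw [this]; ring

lemma aux_tail {t : ℝ} (ht : 0 < t) :
    (gaussianReal 0 1) (Ioi t)
      ≤ ENNReal.ofReal ((Real.sqrt (2*Real.pi))⁻¹ * (Real.exp (-t^2/2) / t)) := by
  rw [gaussianReal_apply_eq_integral 0 one_ne_zero]
  apply ENNReal.ofReal_le_ofReal
  have hpdf : ∀ x : ℝ, gaussianPDFReal 0 1 x = (Real.sqrt (2*Real.pi))⁻¹ * Real.exp (-x^2/2) := by
    intro x
    simp [gaussianPDFReal]
  calc ∫ x in Ioi t, gaussianPDFReal 0 1 x
      = (Real.sqrt (2*Real.pi))⁻¹ * ∫ x in Ioi t, Real.exp (-x^2/2) := by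
        simp_rw [hpdf]; rw [integral_const_mul]
    _ ≤ (Real.sqrt (2*Real.pi))⁻¹ * (Real.exp (-t^2/2) / t) := by
        gcongr
        calc ∫ x in Ioi t, Real.exp (-x^2/2)
            ≤ ∫ x in Ioi t, t⁻¹ * (x * Real.exp (-x^2/2)) := by
              apply setIntegral_mono_on
              · refine ((integrable_exp_neg_mul_sq (b := 1/2) (by norm_num)).integrableOn
                  (s := Ioi t)).congr_fun (fun x _ => ?_) measurableSet_Ioi
                ring_nf
              · apply Integrable.const_mul
                have := (integrable_mul_exp_neg_mul_sq (b := 1/2) (by norm_num)).integrableOn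
                  (s := Ioi t)
                refine this.congr_fun (fun x _ => ?_) measurableSet_Ioi
                ring_nf
              · exact measurableSet_Ioi
              · intro x hx
                rw [mem_Ioi] at hx
                have hx0 : 0 < x := ht.trans hx
                rw [← mul_assoc]
                nth_rewrite 1 [← one_mul (Real.exp (-x^2/2))]
                gcongr
                rw [le_inv_mul_iff₀ ht]
                linarith
            _ = t⁻¹ * Real.exp (-t^2/2) := by
                rw [integral_const_mul, aux_xexp_int]
            _ = Real.exp (-t^2/2) / t := by ring

lemma aux_gamma_intOn {s b : ℝ} (hs : 0 < s) (hb : 0 < b) :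
    IntegrableOn (fun y : ℝ => y ^ (s-1) * Real.exp (-(b*y))) (Ioi 0) := by
  have h1 := Real.GammaIntegral_convergent hs
  have h2 : IntegrableOn (fun y : ℝ => Real.exp (-(b*y)) * (b*y) ^ (s-1)) (Ioi 0) := by
    have := (integrableOn_Ioi_comp_mul_left_iff
      (fun x : ℝ => Real.exp (-x) * x ^ (s-1)) 0 hb).mpr (by simpa using h1)
    simpa using this
  have h3 : IntegrableOn (fun y : ℝ => b ^ (1-s) * (Real.exp (-(b*y)) * (b*y) ^ (s-1)))
      (Ioi 0) := h2.const_mul (b ^ (1-s))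
  refine IntegrableOn.congr_fun h3 (fun y hy => ?_) measurableSet_Ioi
  rw [mem_Ioi] at hy
  rw [mul_rpow hb.le hy.le, mul_comm (Real.exp _), mul_assoc, ← mul_assoc (b ^ (1-s)),
    ← Real.rpow_add hb]
  ring_nf
  rw [Real.rpow_zero, one_mul]

lemma aux_gamma_lint {s b : ℝ} (hs : 0 < s) (hb : 0 < b) :
    ∫⁻ y in Ioi 0, ENNReal.ofReal (y ^ (s-1) * Real.exp (-(b*y)))
      = ENNReal.ofReal ((1/b) ^ s * Real.Gamma s) := by
  rw [← Real.integral_rpow_mul_exp_neg_mul_Ioi hs hb,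
    ofReal_integral_eq_lintegral_ofReal (aux_gamma_intOn hs hb)]
  filter_upwards [self_mem_ae_restrict measurableSet_Ioi] with y hy
  rw [mem_Ioi] at hy
  positivity

lemma aux_gamma_ratio : ∀ d : ℕ, 2 ≤ d →
    Real.sqrt d * Real.Gamma (((d:ℝ)-1)/2) ≤ Real.sqrt (2*Real.pi) * Real.Gamma ((d:ℝ)/2) := by
  intro d
  induction d using Nat.strong_induction_on with
  | _ d ih =>
    intro hd
    match d, hd with
    | 2, _ => 
      norm_num [Real.Gamma_one_half_eq]
    | 3, _ =>
      have h32 : Real.Gamma ((3:ℝ)/2) = Real.sqrt π / 2 := by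
        have : (3:ℝ)/2 = 1/2 + 1 := by norm_num
        rw [this, Real.Gamma_add_one (by norm_num), Real.Gamma_one_half_eq]
        ring
      push_cast
      norm_num [h32, Real.Gamma_one]
      have h1 : Real.sqrt 2 * Real.sqrt π * (Real.sqrt π / 2) = Real.sqrt 2 * (π / 2) := by
        rw [mul_assoc]
        rw [show Real.sqrt π * (Real.sqrt π / 2) = Real.sqrt π * Real.sqrt π / 2 by ring,
          Real.mul_self_sqrt Real.pi_pos.le]
      rw [h1, show Real.sqrt 2 * (π/2) = Real.sqrt 2 * Real.sqrt ((π/2)^2) by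
        rw [Real.sqrt_sq (by positivity)], ← Real.sqrt_mul (by norm_num)]
      apply Real.sqrt_le_sqrt
      nlinarith [Real.pi_gt_three]
    | (n+4), _ =>
      have ihn := ih (n+2) (by omega) (by omega)
      push_cast at ihn ⊢
      rw [show ((n:ℝ)+2-1)/2 = ((n:ℝ)+1)/2 by ring] at ihn
      rw [show ((n:ℝ)+4-1)/2 = ((n:ℝ)+1)/2 + 1 by ring,
        show ((n:ℝ)+4)/2 = ((n:ℝ)+2)/2 + 1 by ring,
        Real.Gamma_add_one (by positivity), Real.Gamma_add_one (by positivity)]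
      have hG1 : 0 < Real.Gamma (((n:ℝ)+1)/2) := Real.Gamma_pos_of_pos (by positivity)
      have hG2 : 0 < Real.Gamma (((n:ℝ)+2)/2) := Real.Gamma_pos_of_pos (by positivity)
      have key : Real.sqrt ((n:ℝ)+4) * (((n:ℝ)+1)/2) ≤ Real.sqrt ((n:ℝ)+2) * (((n:ℝ)+2)/2) := by
        have e1 : Real.sqrt ((n:ℝ)+4) * (((n:ℝ)+1)/2)
            = Real.sqrt (((n:ℝ)+4) * (((n:ℝ)+1)/2)^2) := by
          rw [Real.sqrt_mul (by positivity), Real.sqrt_sq (by positivity)]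
        have e2 : Real.sqrt ((n:ℝ)+2) * (((n:ℝ)+2)/2)
            = Real.sqrt (((n:ℝ)+2) * (((n:ℝ)+2)/2)^2) := by
          rw [Real.sqrt_mul (by positivity), Real.sqrt_sq (by positivity)]
        rw [e1, e2]
        apply Real.sqrt_le_sqrt
        have : (0:ℝ) ≤ n := Nat.cast_nonneg n
        nlinarith
      calc Real.sqrt ((n:ℝ)+4) * ((((n:ℝ)+1)/2) * Real.Gamma (((n:ℝ)+1)/2))
          = (Real.sqrt ((n:ℝ)+4) * (((n:ℝ)+1)/2)) * Real.Gamma (((n:ℝ)+1)/2) := by ring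
        _ ≤ (Real.sqrt ((n:ℝ)+2) * (((n:ℝ)+2)/2)) * Real.Gamma (((n:ℝ)+1)/2) := by
            exact mul_le_mul_of_nonneg_right key hG1.le
        _ = (((n:ℝ)+2)/2) * (Real.sqrt ((n:ℝ)+2) * Real.Gamma (((n:ℝ)+1)/2)) := by ring
        _ ≤ (((n:ℝ)+2)/2) * (Real.sqrt (2*Real.pi) * Real.Gamma (((n:ℝ)+2)/2)) := by
            exact mul_le_mul_of_nonneg_left ihn (by positivity)
        _ = Real.sqrt (2*Real.pi) * ((((n:ℝ)+2)/2) * Real.Gamma (((n:ℝ)+2)/2)) := by ring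

lemma aux_const (d : ℕ) (kr p : ℝ) (hkr : 0 < kr) (hp : 0 < p) :
    ((1:ℝ)/2) ^ ((d:ℝ)/2) * (1/(kr ^ ((2:ℝ)/p)/2)) ^ (((d:ℝ)-1)/2)
      = (Real.sqrt 2)⁻¹ * kr ^ ((1-(d:ℝ))/p) := by
  have hk2 : (0:ℝ) < kr ^ ((2:ℝ)/p) := Real.rpow_pos_of_pos hkr _
  have e0 : (1:ℝ)/(kr ^ ((2:ℝ)/p)/2) = 2 * (kr ^ ((2:ℝ)/p))⁻¹ := by
    field_simp
  calc ((1:ℝ)/2) ^ ((d:ℝ)/2) * (1/(kr ^ ((2:ℝ)/p)/2)) ^ (((d:ℝ)-1)/2)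
      = (2:ℝ)^(-((d:ℝ)/2)) * ((2:ℝ)^(((d:ℝ)-1)/2)
          * ((kr ^ ((2:ℝ)/p))⁻¹) ^ (((d:ℝ)-1)/2)) := by
        rw [e0, Real.mul_rpow (by norm_num) (by positivity), one_div,
          Real.inv_rpow (by norm_num), ← Real.rpow_neg (by norm_num)]
    _ = ((2:ℝ)^(-((d:ℝ)/2)) * (2:ℝ)^(((d:ℝ)-1)/2))
          * kr ^ (((2:ℝ)/p) * (-(((d:ℝ)-1)/2))) := by
        rw [Real.inv_rpow hk2.le, ← Real.rpow_neg hk2.le, ← Real.rpow_mul hkr.le]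
        ring
    _ = (Real.sqrt 2)⁻¹ * kr ^ ((1-(d:ℝ))/p) := by
        rw [← Real.rpow_add (by norm_num : (0:ℝ) < 2),
          show -(((d:ℝ))/2) + (((d:ℝ))-1)/2 = -(1/2) by ring,
          show ((2:ℝ)/p) * (-((((d:ℝ))-1)/2)) = (1-(d:ℝ))/p by field_simp; ring,
          Real.rpow_neg (by norm_num), Real.sqrt_eq_rpow]

lemma aux_final (δ p A L sd G1 G2 κ : ℝ) (hδ : 0 < δ) (hp : 0 < p) (hA : 0 < A)
    (hL : 0 < L) (hsd : 0 < sd) (hG2 : 0 < G2) (hG1 : 0 < G1) (hκ : 0 < κ)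
    (hratio : sd * G1 ≤ Real.sqrt (2*Real.pi) * G2) (hpA : L ≤ p * A) :
    (Real.sqrt (2*Real.pi))⁻¹ * Real.exp (-δ^2/2) / (Real.exp 1 * δ^2 * A)
        * ((Real.sqrt 2)⁻¹ * (κ * (G1/G2)))
      ≤ Real.exp (-(1+δ^2)/2) * p / (2*δ^2*sd) * (κ/L) := by
  have hsπ : 0 < Real.sqrt (2*Real.pi) := Real.sqrt_pos.mpr (by positivity)
  have hs2 : 0 < Real.sqrt 2 := Real.sqrt_pos.mpr (by norm_num)
  have hsq2 : Real.sqrt 2 * Real.sqrt 2 = 2 := Real.mul_self_sqrt (by norm_num)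
  have h2e : (2:ℝ) ≤ Real.exp 1 := by nlinarith [Real.add_one_le_exp (1:ℝ)]
  set E := Real.exp (-δ^2/2) with hE
  have hEpos : 0 < E := Real.exp_pos _
  have hsplit : Real.exp (-(1+δ^2)/2) = Real.exp (-(1/2)) * E := by
    rw [hE, ← Real.exp_add]; congr 1; ring
  have hhalf : Real.exp (-(1/2)) * Real.exp 1 = Real.exp (1/2) := by
    rw [← Real.exp_add]; norm_num
  have hsqe : Real.sqrt 2 ≤ Real.exp (1/2) := by
    have h1 : Real.exp (1/2) * Real.exp (1/2) = Real.exp 1 := by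
      rw [← Real.exp_add]; norm_num
    nlinarith [Real.exp_pos (1/2 : ℝ)]
  have key : 2*L ≤ Real.exp (-(1/2)) * Real.exp 1 * Real.sqrt 2 * (p*A) := by
    rw [hhalf]
    have hpA0 : 0 < p * A := mul_pos hp hA
    calc 2*L ≤ 2*(p*A) := by linarith
      _ ≤ (Real.exp (1/2) * Real.sqrt 2) * (p*A) := by
          have h := mul_le_mul_of_nonneg_right hsqe hs2.le
          rw [hsq2] at h
          exact mul_le_mul_of_nonneg_right h hpA0.le
  have lhs_eq : (Real.sqrt (2*Real.pi))⁻¹ * E / (Real.exp 1 * δ^2 * A)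
        * ((Real.sqrt 2)⁻¹ * (κ * (G1/G2)))
      = E * κ * G1 / (Real.sqrt (2*Real.pi) * Real.exp 1 * δ^2 * A * Real.sqrt 2 * G2) := by
    field_simp
  have rhs_eq : Real.exp (-(1+δ^2)/2) * p / (2*δ^2*sd) * (κ/L)
      = Real.exp (-(1/2)) * E * p * κ / (2*δ^2*sd*L) := by
    rw [hsplit]; field_simp; try ring
  rw [lhs_eq, rhs_eq, div_le_div_iff₀ (by positivity) (by positivity)]
  have hm := mul_le_mul hratio key (by positivity) (by positivity)
  calc E * κ * G1 * (2*δ^2*sd*L) = (E*κ*δ^2) * ((sd*G1) * (2*L)) := by ring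
    _ ≤ (E*κ*δ^2) * ((Real.sqrt (2*Real.pi) * G2)
          * (Real.exp (-(1/2)) * Real.exp 1 * Real.sqrt 2 * (p*A))) := by
        exact mul_le_mul_of_nonneg_left hm (by positivity)
    _ = Real.exp (-(1/2)) * E * p * κ * (Real.sqrt (2*Real.pi) * Real.exp 1 * δ^2 * A
          * Real.sqrt 2 * G2) := by ring

set_option maxHeartbeats 1000000 in
theorem prop1_upper_bound (d : ℕ) (hd : 2 ≤ d) (δ p : ℝ) (hδ : 0 < δ) (hp : 0 < p)
    (k : ℕ) (hk : 2 ≤ k) :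
    ((gaussianReal 0 1).prod (gammaMeasure ((d : ℝ) / 2) (1 / 2)))
        {q : ℝ × ℝ | δ + Real.sqrt q.2 * Real.sqrt ((k : ℝ) ^ ((2 : ℝ) / p) - 1) < q.1}
      ≤ ENNReal.ofReal (Real.exp (-(1 + δ ^ 2) / 2) * p / (2 * δ ^ 2 * Real.sqrt d)
          * ((k : ℝ) ^ ((1 - (d : ℝ)) / p) / Real.log k)) := by
  have hkr1 : (1:ℝ) < (k:ℝ) := by exact_mod_cast hk.trans_lt' one_lt_two
  have hkr0 : (0:ℝ) < (k:ℝ) := by linarith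
  have hdR : (2:ℝ) ≤ (d:ℝ) := by exact_mod_cast hd
  have hX : (1:ℝ) < (k:ℝ) ^ ((2:ℝ)/p) :=
    Real.one_lt_rpow_iff_of_pos hkr0 |>.mpr (Or.inl ⟨hkr1, by positivity⟩)
  set A := Real.sqrt ((k:ℝ) ^ ((2:ℝ)/p) - 1) with hAdef
  have hA : 0 < A := Real.sqrt_pos.mpr (by linarith)
  have hA2 : A^2 = (k:ℝ) ^ ((2:ℝ)/p) - 1 := Real.sq_sqrt (by linarith)
  set L := Real.log (k:ℝ) with hLdef
  have hL : 0 < L := Real.log_pos hkr1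
  -- L ≤ p * A
  have hpA : L ≤ p * A := by
    set x := Real.log (k:ℝ) * ((2:ℝ)/p) with hxdef
    have hx0 : 0 ≤ x := by positivity
    have hex : (k:ℝ) ^ ((2:ℝ)/p) = Real.exp x := Real.rpow_def_of_pos hkr0 _
    have h4 : (1 + x/2)^2 ≤ Real.exp x := by
      have h := Real.add_one_le_exp (x/2)
      have h2 : Real.exp (x/2) * Real.exp (x/2) = Real.exp x := by
        rw [← Real.exp_add]; norm_num
      nlinarith [Real.exp_pos (x/2)]
    have hAx : x/2 ≤ A := by nlinarith [hA.le]
    have hpx : p * (x/2) = L := by rw [hxdef, hLdef]; field_simp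
    calc L = p * (x/2) := hpx.symm
      _ ≤ p * A := by gcongr
  set c := A^2/2 with hc
  set b := 1/2 + c with hb
  have hbpos : 0 < b := by rw [hb, hc]; positivity
  have hbk : b = (k:ℝ) ^ ((2:ℝ)/p) / 2 := by rw [hb, hc, hA2]; ring
  set s := ((d:ℝ)-1)/2 with hs
  have hspos : 0 < s := by rw [hs]; linarith
  set C := (Real.sqrt (2*Real.pi))⁻¹ * Real.exp (-δ^2/2) / (Real.exp 1 * δ^2 * A) with hC
  have hCpos : 0 < C := by rw [hC]; positivity
  set ν := gammaMeasure ((d : ℝ) / 2) (1 / 2) with hν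
  haveI : IsProbabilityMeasure ν :=
    isProbabilityMeasure_gammaMeasure (by positivity) (by norm_num)
  set g : ℝ → ℝ≥0∞ := fun y => ENNReal.ofReal (C * ((Real.sqrt y)⁻¹ * Real.exp (-(c*y))))
    with hg
  have hgmeas : Measurable g := by
    apply Measurable.ennreal_ofReal
    fun_prop
  set S := {q : ℝ × ℝ | δ + Real.sqrt q.2 * A < q.1} with hS
  have hSm : MeasurableSet S := by
    apply measurableSet_lt
    · fun_prop
    · fun_prop
  -- a.e. positivity under ν
  have hν0 : ν (Iic 0) = 0 := by
    rw [hν, gammaMeasure, withDensity_apply _ measurableSet_Iic,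
      setLIntegral_congr (Iio_ae_eq_Iic (a := (0:ℝ))).symm]
    exact lintegral_gammaPDF_of_nonpos le_rfl
  have haey : ∀ᵐ y ∂ν, 0 < y := by
    rw [ae_iff]
    have : {y : ℝ | ¬ 0 < y} = Iic 0 := by ext y; simp
    rw [this]; exact hν0
  -- step 2: pointwise a.e. bound
  have step2 : ∀ᵐ y ∂ν, (gaussianReal 0 1) ((fun x => (x, y)) ⁻¹' S) ≤ g y := by
    filter_upwards [haey] with y hy
    have hpre : (fun x => (x, y)) ⁻¹' S = Ioi (δ + Real.sqrt y * A) := rfl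
    rw [hpre]
    have hsy : 0 < Real.sqrt y := Real.sqrt_pos.mpr hy
    have ht : 0 < δ + Real.sqrt y * A := by positivity
    refine le_trans (aux_tail ht) (ENNReal.ofReal_le_ofReal ?_)
    set z := δ * (A * Real.sqrt y) with hz
    have hzpos : 0 < z := by rw [hz]; positivity
    have hze : Real.exp (-z) ≤ (Real.exp 1 * z)⁻¹ := by
      have h1 : z * Real.exp 1 ≤ Real.exp z := by
        have h2 := Real.add_one_le_exp (z - 1)
        have h3 : Real.exp (z-1) * Real.exp 1 = Real.exp z := by
          rw [← Real.exp_add]; norm_num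
        nlinarith [Real.exp_pos (z-1), Real.exp_pos 1]
      rw [Real.exp_neg]
      gcongr
      linarith
    have hsqeq : (δ + Real.sqrt y * A)^2 = δ^2 + 2*z + A^2*y := by
      rw [hz]; linear_combination A^2 * Real.sq_sqrt hy.le
    have hexp : Real.exp (-(δ + Real.sqrt y * A)^2/2)
        = Real.exp (-δ^2/2) * Real.exp (-z) * Real.exp (-(c*y)) := by
      rw [← Real.exp_add, ← Real.exp_add]
      congr 1
      rw [hsqeq, hc]; ring
    calc (Real.sqrt (2*Real.pi))⁻¹ * (Real.exp (-(δ + Real.sqrt y * A)^2/2) / (δ + Real.sqrt y * A))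
        = (Real.sqrt (2*Real.pi))⁻¹ * ((Real.exp (-δ^2/2) * Real.exp (-z) * Real.exp (-(c*y)))
            / (δ + Real.sqrt y * A)) := by rw [hexp]
      _ ≤ (Real.sqrt (2*Real.pi))⁻¹ * ((Real.exp (-δ^2/2) * (Real.exp 1 * z)⁻¹ * Real.exp (-(c*y)))
            / δ) := by
          gcongr
          all_goals first
            | exact hze
            | positivity
            | nlinarith [mul_pos hsy hA]
      _ = C * ((Real.sqrt y)⁻¹ * Real.exp (-(c*y))) := by
          rw [hC, hz]
          field_simp
  -- step 3: value of ∫ g dν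
  set K := C * (((1:ℝ)/2) ^ ((d:ℝ)/2) / Real.Gamma ((d:ℝ)/2)) with hK
  have hG2 : 0 < Real.Gamma ((d:ℝ)/2) := Real.Gamma_pos_of_pos (by positivity)
  have hG1 : 0 < Real.Gamma s := Real.Gamma_pos_of_pos hspos
  have hKpos : 0 < K := by rw [hK]; positivity
  have step3 : ∫⁻ y, g y ∂ν = ENNReal.ofReal (K * ((1/b) ^ s * Real.Gamma s)) := by
    have hpdfmeas : Measurable (gammaPDF ((d:ℝ)/2) (1/2)) :=
      (measurable_gammaPDFReal _ _).ennreal_ofReal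
    rw [hν, gammaMeasure, lintegral_withDensity_eq_lintegral_mul _ hpdfmeas hgmeas]
    simp only [Pi.mul_apply]
    have hsplit : (∫⁻ y in Ioi (0:ℝ), (gammaPDF ((d:ℝ)/2) (1/2) y) * g y)
        + (∫⁻ y in (Ioi (0:ℝ))ᶜ, (gammaPDF ((d:ℝ)/2) (1/2) y) * g y)
        = ∫⁻ y, (gammaPDF ((d:ℝ)/2) (1/2) y) * g y :=
      lintegral_add_compl _ measurableSet_Ioi
    have hIic : ∫⁻ y in (Ioi (0:ℝ))ᶜ, (gammaPDF ((d:ℝ)/2) (1/2) y) * g y = 0 := by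
      rw [compl_Ioi, setLIntegral_congr (Iio_ae_eq_Iic (a := (0:ℝ))).symm,
        setLIntegral_congr_fun (g := fun _ => 0) measurableSet_Iio
          (fun y hy => by rw [gammaPDF_of_neg hy, zero_mul])]
      simp
    have hpoint : ∀ y ∈ Ioi (0:ℝ), (gammaPDF ((d:ℝ)/2) (1/2) y) * g y
        = ENNReal.ofReal K * ENNReal.ofReal (y ^ (s-1) * Real.exp (-(b*y))) := by
      intro y hy
      rw [mem_Ioi] at hy
      rw [gammaPDF_of_nonneg hy.le, hg, ← ENNReal.ofReal_mul (by positivity),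
        ← ENNReal.ofReal_mul hKpos.le]
      congr 1
      have e1 : (Real.sqrt y)⁻¹ = y ^ (-(1/2) : ℝ) := by
        rw [Real.rpow_neg hy.le, ← Real.sqrt_eq_rpow]
      calc ((1:ℝ)/2) ^ ((d:ℝ)/2) / Real.Gamma ((d:ℝ)/2) * y ^ ((d:ℝ)/2 - 1)
            * Real.exp (-(1/2*y)) * (C * ((Real.sqrt y)⁻¹ * Real.exp (-(c*y))))
          = K * ((y ^ ((d:ℝ)/2 - 1) * (Real.sqrt y)⁻¹)
              * (Real.exp (-(1/2*y)) * Real.exp (-(c*y)))) := by rw [hK]; ring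
        _ = K * (y ^ (s-1) * Real.exp (-(b*y))) := by
            rw [e1, ← Real.rpow_add hy, ← Real.exp_add,
              show (d:ℝ)/2 - 1 + -(1/2) = s - 1 by rw [hs]; ring,
              show -(1/2*y) + -(c*y) = -(b*y) by rw [hb]; ring]
    have hIoi : ∫⁻ y in Ioi (0:ℝ), (gammaPDF ((d:ℝ)/2) (1/2) y) * g y
        = ENNReal.ofReal (K * ((1/b) ^ s * Real.Gamma s)) := by
      rw [setLIntegral_congr_fun measurableSet_Ioi hpoint,
        lintegral_const_mul' _ _ ENNReal.ofReal_ne_top,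
        aux_gamma_lint hspos hbpos, ← ENNReal.ofReal_mul hKpos.le]
    rw [← hsplit, hIic, hIoi, add_zero]
  -- assemble
  have hmain : ((gaussianReal 0 1).prod ν) S ≤ ENNReal.ofReal (K * ((1/b) ^ s * Real.Gamma s)) := by
    rw [Measure.prod_apply_symm hSm, ← step3]
    exact lintegral_mono_ae step2
  refine hmain.trans (ENNReal.ofReal_le_ofReal ?_)
  have heq : K * ((1/b) ^ s * Real.Gamma s)
      = C * ((Real.sqrt 2)⁻¹ * ((k:ℝ) ^ ((1-(d:ℝ))/p)
          * (Real.Gamma s / Real.Gamma ((d:ℝ)/2)))) := by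
    calc K * ((1/b) ^ s * Real.Gamma s)
        = C * ((((1:ℝ)/2) ^ ((d:ℝ)/2) * (1/b) ^ s) * (Real.Gamma s / Real.Gamma ((d:ℝ)/2))) := by
          rw [hK]; field_simp
      _ = C * (((Real.sqrt 2)⁻¹ * (k:ℝ) ^ ((1-(d:ℝ))/p)) * (Real.Gamma s / Real.Gamma ((d:ℝ)/2))) := by
          rw [hbk, hs, aux_const d (k:ℝ) p hkr0 hp]
      _ = C * ((Real.sqrt 2)⁻¹ * ((k:ℝ) ^ ((1-(d:ℝ))/p) * (Real.Gamma s / Real.Gamma ((d:ℝ)/2)))) := by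
          ring
  rw [heq, hC]
  exact aux_final δ p A L (Real.sqrt d) (Real.Gamma s) (Real.Gamma ((d:ℝ)/2))
    ((k:ℝ) ^ ((1-(d:ℝ))/p)) hδ hp hA hL (Real.sqrt_pos.mpr (by linarith)) hG2 hG1
    (Real.rpow_pos_of_pos hkr0 _) (by rw [hs]; exact aux_gamma_ratio d hd) hpA
end

section
/- For G > 0 and 0 ≤ ε < 1/2: 1/ln(1 + G(1-ε)²/(1+ε)) ≤ 1/ln(1+G) + (10G)/((1+G)·(ln(1+G))²)·ε. -/
open Real Set

/-- endpoint comparison from a derivative bound on `[a, ∞)` -/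
lemma le_of_deriv_nonneg {a b : ℝ} {f f' : ℝ → ℝ} (hab : a ≤ b)
    (hd : ∀ x, a ≤ x → HasDerivAt f (f' x) x)
    (h0 : ∀ x, a ≤ x → 0 ≤ f' x) : f a ≤ f b := by
  have hmono : MonotoneOn f (Set.Ici a) := by
    apply monotoneOn_of_deriv_nonneg (convex_Ici a)
    · exact fun x hx => (hd x hx).continuousAt.continuousWithinAt
    · intro x hx
      rw [interior_Ici] at hx
      exact (hd x hx.le).differentiableAt.differentiableWithinAt
    · intro x hx
      rw [interior_Ici] at hx
      rw [(hd x hx.le).deriv]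
      exact h0 x hx.le
  exact hmono Set.self_mem_Ici hab hab

lemma two_mul_div_le_log {x : ℝ} (hx : 0 ≤ x) : 2 * x / (2 + x) ≤ Real.log (1 + x) := by
  have key : (fun y : ℝ => Real.log (1 + y) - 2 * y / (2 + y)) 0
      ≤ (fun y : ℝ => Real.log (1 + y) - 2 * y / (2 + y)) x := by
    refine le_of_deriv_nonneg (f := fun y : ℝ => Real.log (1 + y) - 2 * y / (2 + y))
        (f' := fun y => y ^ 2 / ((1 + y) * (2 + y) ^ 2)) hx ?_ ?_
    · intro y hy
      have h1 : (0:ℝ) < 1 + y := by linarith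
      have h2 : (0:ℝ) < 2 + y := by linarith
      have hlog : HasDerivAt (fun z : ℝ => Real.log (1 + z)) (1 / (1 + y)) y := by
        have := ((hasDerivAt_id y).const_add 1).log h1.ne'
        simpa using this
      have hdiv : HasDerivAt (fun z : ℝ => 2 * z / (2 + z))
          ((2 * (2 + y) - 2 * y * 1) / (2 + y) ^ 2) y := by
        simpa using ((hasDerivAt_id y).const_mul 2).fun_div ((hasDerivAt_id y).const_add 2) h2.ne'
      have := hlog.fun_sub hdiv
      refine this.congr_deriv ?_
      field_simp
      ring
    · intro y hy
      have h1 : (0:ℝ) < 1 + y := by linarith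
      have h2 : (0:ℝ) < 2 + y := by linarith
      positivity
  simpa using key

lemma keyC {a b : ℝ} (ha : 0 < a) (hab : a ≤ b) :
    a * (1 + b) * Real.log (1 + b) * (Real.log (1 + b) - Real.log (1 + a))
      ≤ b * (b - a) * Real.log (1 + a) := by
  set A := Real.log (1 + a) with hAdef
  have h1a : (0:ℝ) < 1 + a := by linarith
  have hA0 : 0 < A := Real.log_pos (by linarith)
  have hlog : ∀ x : ℝ, a ≤ x → HasDerivAt (fun z : ℝ => Real.log (1 + z)) (1 / (1 + x)) x := by
    intro x hx
    have h1x : (0:ℝ) < 1 + x := by linarith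
    simpa using ((hasDerivAt_id x).const_add 1).log h1x.ne'
  -- f2
  have hd2 : ∀ y, a ≤ y →
      HasDerivAt (fun z : ℝ => 2 * A - a * ((2 * Real.log (1 + z) - A + 2) / (1 + z)))
        (a * (2 * Real.log (1 + y) - A) / (1 + y) ^ 2) y := by
    intro y hy
    have h1y : (0:ℝ) < 1 + y := by linarith
    have hu : HasDerivAt (fun z : ℝ => 2 * Real.log (1 + z) - A + 2) (2 * (1 / (1 + y))) y :=
      (((hlog y hy).const_mul 2).sub_const A).add_const 2
    have hq := hu.fun_div ((hasDerivAt_id y).const_add 1) h1y.ne'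
    have := (hasDerivAt_const y (2 * A)).fun_sub (hq.const_mul a)
    refine this.congr_deriv ?_
    simp only [id_eq]
    field_simp
    ring
  have hf2a : 0 ≤ 2 * A - a * ((2 * Real.log (1 + a) - A + 2) / (1 + a)) := by
    have h2a : 2 * a ≤ A * (2 + a) := by
      have := two_mul_div_le_log ha.le
      rw [div_le_iff₀ (by linarith)] at this
      linarith
    have e : 2 * A - a * ((2 * Real.log (1 + a) - A + 2) / (1 + a))
        = (2 * A + a * A - 2 * a) / (1 + a) := by
      rw [← hAdef]
      field_simp
      ring
    rw [e]
    apply div_nonneg _ h1a.le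
    linarith
  have hf2 : ∀ x, a ≤ x → 0 ≤ 2 * A - a * ((2 * Real.log (1 + x) - A + 2) / (1 + x)) := by
    intro x hx
    have step := le_of_deriv_nonneg
      (f := fun z : ℝ => 2 * A - a * ((2 * Real.log (1 + z) - A + 2) / (1 + z)))
      (f' := fun y => a * (2 * Real.log (1 + y) - A) / (1 + y) ^ 2) hx hd2 ?_
    · exact le_trans hf2a step
    intro y hy
    have h1y : (0:ℝ) < 1 + y := by linarith
    have hB : A ≤ Real.log (1 + y) := Real.log_le_log h1a (by linarith)
    have : (0:ℝ) ≤ 2 * Real.log (1 + y) - A := by linarith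
    positivity
  -- f1
  have hd1 : ∀ y, a ≤ y →
      HasDerivAt (fun z : ℝ => (2 * z - a) * A
          - a * ((Real.log (1 + z)) ^ 2 - A * Real.log (1 + z) + 2 * Real.log (1 + z) - A))
        (2 * A - a * ((2 * Real.log (1 + y) - A + 2) / (1 + y))) y := by
    intro y hy
    have h1y : (0:ℝ) < 1 + y := by linarith
    have hp1 : HasDerivAt (fun z : ℝ => (2 * z - a) * A) (2 * A) y := by
      simpa using (((hasDerivAt_id y).const_mul 2).sub_const a).mul_const A
    have hp2 := ((((hlog y hy).fun_pow 2).fun_sub ((hlog y hy).const_mul A)).fun_add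
      ((hlog y hy).const_mul 2)).sub_const A
    have := hp1.fun_sub (hp2.const_mul a)
    refine this.congr_deriv ?_
    field_simp
    try ring
  have hf1 : ∀ x, a ≤ x → 0 ≤ (2 * x - a) * A
      - a * ((Real.log (1 + x)) ^ 2 - A * Real.log (1 + x) + 2 * Real.log (1 + x) - A) := by
    intro x hx
    have h0 : (2 * a - a) * A
        - a * ((Real.log (1 + a)) ^ 2 - A * Real.log (1 + a) + 2 * Real.log (1 + a) - A) = 0 := by
      rw [← hAdef]; ring
    have step := le_of_deriv_nonneg
      (f := fun z : ℝ => (2 * z - a) * A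
          - a * ((Real.log (1 + z)) ^ 2 - A * Real.log (1 + z) + 2 * Real.log (1 + z) - A))
      (f' := fun y => 2 * A - a * ((2 * Real.log (1 + y) - A + 2) / (1 + y))) hx hd1 hf2
    linarith [step, le_of_eq h0.symm]
  -- f0
  have hd0 : ∀ y, a ≤ y →
      HasDerivAt (fun z : ℝ => z * (z - a) * A
          - a * ((1 + z) * (Real.log (1 + z) * (Real.log (1 + z) - A))))
        ((2 * y - a) * A
          - a * ((Real.log (1 + y)) ^ 2 - A * Real.log (1 + y) + 2 * Real.log (1 + y) - A)) y := by
    intro y hy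
    have h1y : (0:ℝ) < 1 + y := by linarith
    have hp1 : HasDerivAt (fun z : ℝ => z * (z - a) * A) ((2 * y - a) * A) y := by
      have := ((hasDerivAt_id y).fun_mul ((hasDerivAt_id y).sub_const a)).mul_const A
      refine this.congr_deriv ?_
      simp only [id_eq]
      try ring
      try exact Or.inl (by ring)
    have hp2 := ((hasDerivAt_id y).const_add 1).fun_mul
      ((hlog y hy).fun_mul ((hlog y hy).sub_const A))
    have := hp1.fun_sub (hp2.const_mul a)
    refine this.congr_deriv ?_
    simp only [id_eq]
    field_simp
    try ring
    try exact Or.inl trivial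
  have hfinal := le_of_deriv_nonneg
    (f := fun z : ℝ => z * (z - a) * A
        - a * ((1 + z) * (Real.log (1 + z) * (Real.log (1 + z) - A))))
    (f' := fun y => (2 * y - a) * A
        - a * ((Real.log (1 + y)) ^ 2 - A * Real.log (1 + y) + 2 * Real.log (1 + y) - A))
    hab hd0 hf1
  have h0 : a * (a - a) * A - a * ((1 + a) * (Real.log (1 + a) * (Real.log (1 + a) - A))) = 0 := by
    rw [← hAdef]; ring
  nlinarith [hfinal, h0]

theorem log_recip_perturbation (G ε : ℝ) (hG : 0 < G) (hε0 : 0 ≤ ε) (hε : ε < 1 / 2) :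
    1 / Real.log (1 + G * (1 - ε) ^ 2 / (1 + ε))
      ≤ 1 / Real.log (1 + G)
        + 10 * G / ((1 + G) * (Real.log (1 + G)) ^ 2) * ε := by
  have hε1 : (0:ℝ) < 1 + ε := by linarith
  have h1ε : (0:ℝ) < 1 - ε := by linarith
  set s : ℝ := (1 - ε) ^ 2 / (1 + ε) with hs
  have hs0 : 0 < s := by positivity
  have hs1 : s ≤ 1 := by
    rw [div_le_one hε1]; nlinarith
  have hsa : G * (1 - ε) ^ 2 / (1 + ε) = G * s := by rw [hs]; ring
  rw [hsa]
  set a : ℝ := G * s with ha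
  have ha0 : 0 < a := by positivity
  have hab : a ≤ G := by
    rw [ha]; nlinarith
  set l : ℝ := Real.log (1 + a) with hl
  set L : ℝ := Real.log (1 + G) with hL
  have hl0 : 0 < l := Real.log_pos (by linarith)
  have hL0 : 0 < L := Real.log_pos (by linarith)
  have hlL : l ≤ L := Real.log_le_log (by linarith) (by linarith)
  -- key inequality
  have hC : a * (1 + G) * L * (L - l) ≤ G * (G - a) * l := keyC ha0 hab
  -- i.e. s * (1+G) * L * (L - l) ≤ G * (1 - s) * l
  have hC' : s * (1 + G) * L * (L - l) ≤ G * (1 - s) * l := by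
    have := hC
    rw [ha] at this
    have hG' : G * (s * (1 + G) * L * (L - l)) ≤ G * (G * (1 - s) * l) := by
      nlinarith [this]
    exact le_of_mul_le_mul_left hG' hG
  -- step 2 : 1 - s ≤ 10 * ε * s
  have hstep2 : 1 - s ≤ 10 * ε * s := by
    have key : (1 + ε) - (1 - ε) ^ 2 ≤ 10 * ε * (1 - ε) ^ 2 := by
      nlinarith [mul_nonneg (mul_nonneg hε0 (by linarith : (0:ℝ) ≤ 1 - 2*ε))
        (by linarith : (0:ℝ) ≤ 7 - 5*ε)]
    calc 1 - s = ((1 + ε) - (1 - ε) ^ 2) / (1 + ε) := by rw [hs]; field_simp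
      _ ≤ (10 * ε * (1 - ε) ^ 2) / (1 + ε) := by gcongr
      _ = 10 * ε * s := by rw [hs]; ring
  -- combine: (1+G) * L * (L - l) ≤ 10 * G * ε * l
  have hT : (1 + G) * L * (L - l) ≤ 10 * G * ε * l := by
    have h2 : G * (1 - s) * l ≤ G * (10 * ε * s) * l := by
      apply mul_le_mul_of_nonneg_right _ hl0.le
      exact mul_le_mul_of_nonneg_left hstep2 hG.le
    have h3 : s * ((1 + G) * L * (L - l)) ≤ s * (10 * G * ε * l) := by
      nlinarith [hC', h2]
    exact le_of_mul_le_mul_left h3 hs0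
  -- final algebra
  have hden : (0:ℝ) < (1 + G) * L ^ 2 := by positivity
  calc 1 / l ≤ ((1 + G) * L + 10 * G * ε) / ((1 + G) * L ^ 2) := by
        rw [div_le_div_iff₀ hl0 hden]
        nlinarith [hT]
    _ = 1 / L + 10 * G / ((1 + G) * L ^ 2) * ε := by
        field_simp
end

section
/- For every fixed G > 0, the function H_G(ε) = 1/ln(1 + G(1-ε)²/(1+ε)) is positive, monotone increasing, and convex on ε ∈ [0,1). -/
open Real Set

namespace HAux

/-- derivative of N(x) = 1 + G (1-x)^2/(1+x) -/
lemma N_hasDerivAt (G x : ℝ) (hx : (-1:ℝ) < x) :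
    HasDerivAt (fun x : ℝ => 1 + G * (1 - x) ^ 2 / (1 + x))
      (G * (x - 1) * (x + 3) / (1 + x) ^ 2) x := by
  have hd : (1:ℝ) + x ≠ 0 := by linarith
  have h1 : HasDerivAt (fun x : ℝ => G * (1 - x) ^ 2) (G * (2 * (1 - x) * (-1))) x := by
    have h := (((hasDerivAt_id x).const_sub 1).pow 2).const_mul G
    simpa using h
  have h2 : HasDerivAt (fun x : ℝ => 1 + x) 1 x := by
    simpa using (hasDerivAt_id x).const_add 1
  have h := (hasDerivAt_const x (1:ℝ)).add (h1.div h2 hd)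
  refine h.congr_deriv ?_
  field_simp
  ring

lemma N_gt_one (G x : ℝ) (hG : 0 < G) (hx : (-1:ℝ) < x) (hx1 : x < 1) :
    1 < 1 + G * (1 - x) ^ 2 / (1 + x) := by
  have h1 : 0 < 1 + x := by linarith
  have h2 : 0 < (1 - x) ^ 2 := by nlinarith
  nlinarith [div_pos (mul_pos hG h2) h1]

lemma f_hasDerivAt (G x : ℝ) (hG : 0 < G) (hx : (-1:ℝ) < x) (hx1 : x < 1) :
    HasDerivAt (fun x : ℝ => 1 / Real.log (1 + G * (1 - x) ^ 2 / (1 + x)))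
      (-(G * (x - 1) * (x + 3) / (1 + x) ^ 2) /
        ((1 + G * (1 - x) ^ 2 / (1 + x)) *
          Real.log (1 + G * (1 - x) ^ 2 / (1 + x)) ^ 2)) x := by
  have hN1 : 1 < 1 + G * (1 - x) ^ 2 / (1 + x) := N_gt_one G x hG hx hx1
  have hNpos : (0:ℝ) < 1 + G * (1 - x) ^ 2 / (1 + x) := by linarith
  have hLpos : 0 < Real.log (1 + G * (1 - x) ^ 2 / (1 + x)) := Real.log_pos hN1
  have hN := N_hasDerivAt G x hx
  have hlog := hN.log (ne_of_gt hNpos)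
  have hinv := hlog.inv (ne_of_gt hLpos)
  have h : HasDerivAt (fun x : ℝ => 1 / Real.log (1 + G * (1 - x) ^ 2 / (1 + x)))
      (-(G * (x - 1) * (x + 3) / (1 + x) ^ 2 / (1 + G * (1 - x) ^ 2 / (1 + x))) /
        Real.log (1 + G * (1 - x) ^ 2 / (1 + x)) ^ 2) x := by
    simpa [one_div, Pi.inv_def] using hinv
  refine h.congr_deriv ?_
  field_simp

lemma F_hasDerivAt (G x : ℝ) (hG : 0 < G) (hx : (-1:ℝ) < x) (hx1 : x < 1) :
    HasDerivAt (fun x : ℝ => -(G * (x - 1) * (x + 3) / (1 + x) ^ 2) /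
        ((1 + G * (1 - x) ^ 2 / (1 + x)) * Real.log (1 + G * (1 - x) ^ 2 / (1 + x)) ^ 2))
      (Real.log (1 + G * (1 - x) ^ 2 / (1 + x)) *
        (((G * (x - 1) * (x + 3) / (1 + x) ^ 2) ^ 2
            - (8 * G / (1 + x) ^ 3) * (1 + G * (1 - x) ^ 2 / (1 + x)))
              * Real.log (1 + G * (1 - x) ^ 2 / (1 + x))
          + 2 * (G * (x - 1) * (x + 3) / (1 + x) ^ 2) ^ 2) /
        ((1 + G * (1 - x) ^ 2 / (1 + x)) * Real.log (1 + G * (1 - x) ^ 2 / (1 + x)) ^ 2) ^ 2) x := by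
  have hd : (0:ℝ) < 1 + x := by linarith
  have hdne : (1:ℝ) + x ≠ 0 := ne_of_gt hd
  have hN1 : 1 < 1 + G * (1 - x) ^ 2 / (1 + x) := N_gt_one G x hG hx hx1
  have hNpos : (0:ℝ) < 1 + G * (1 - x) ^ 2 / (1 + x) := by linarith
  have hNne := ne_of_gt hNpos
  have hLpos : 0 < Real.log (1 + G * (1 - x) ^ 2 / (1 + x)) := Real.log_pos hN1
  have hLne := ne_of_gt hLpos
  have hN := N_hasDerivAt G x hx
  have hlog := hN.log hNne
  have hnum : HasDerivAt (fun x : ℝ => G * (x - 1) * (x + 3))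
      (G * 1 * (x + 3) + G * (x - 1) * 1) x :=
    (((hasDerivAt_id x).sub_const 1).const_mul G).mul ((hasDerivAt_id x).add_const 3)
  have hden2 : HasDerivAt (fun x : ℝ => (1 + x) ^ 2) (2 * (1 + x)) x := by
    have h := ((hasDerivAt_id x).const_add 1).pow 2
    exact h.congr_deriv (by simp)
  have hA : HasDerivAt (fun x : ℝ => -(G * (x - 1) * (x + 3) / (1 + x) ^ 2))
      (-(8 * G / (1 + x) ^ 3)) x := by
    refine (hnum.div hden2 (by positivity)).neg.congr_deriv ?_
    field_simp
    ring
  have hD : HasDerivAt (fun x : ℝ => (1 + G * (1 - x) ^ 2 / (1 + x)) *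
        Real.log (1 + G * (1 - x) ^ 2 / (1 + x)) ^ 2)
      ((G * (x - 1) * (x + 3) / (1 + x) ^ 2) *
          Real.log (1 + G * (1 - x) ^ 2 / (1 + x)) ^ 2
        + 2 * Real.log (1 + G * (1 - x) ^ 2 / (1 + x)) *
            (G * (x - 1) * (x + 3) / (1 + x) ^ 2)) x := by
    refine (hN.mul (hlog.pow 2)).congr_deriv ?_
    rw [pow_one, Pi.pow_apply]
    field_simp
    ring
  have hDne : (1 + G * (1 - x) ^ 2 / (1 + x)) *
      Real.log (1 + G * (1 - x) ^ 2 / (1 + x)) ^ 2 ≠ 0 := by positivity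
  have hF := hA.div hD hDne
  refine hF.congr_deriv ?_
  ring

lemma key_nonneg (G x : ℝ) (hG : 0 < G) (hx0 : (0:ℝ) ≤ x) (hx1 : x < 1) :
    0 ≤ ((G * (x - 1) * (x + 3) / (1 + x) ^ 2) ^ 2
            - (8 * G / (1 + x) ^ 3) * (1 + G * (1 - x) ^ 2 / (1 + x)))
              * Real.log (1 + G * (1 - x) ^ 2 / (1 + x))
          + 2 * (G * (x - 1) * (x + 3) / (1 + x) ^ 2) ^ 2 := by
  have hx : (-1:ℝ) < x := by linarith
  have hd : (0:ℝ) < 1 + x := by linarith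
  have hdne : (1:ℝ) + x ≠ 0 := ne_of_gt hd
  have hN1 : 1 < 1 + G * (1 - x) ^ 2 / (1 + x) := N_gt_one G x hG hx hx1
  have hNpos : (0:ℝ) < 1 + G * (1 - x) ^ 2 / (1 + x) := by linarith
  have hLpos : 0 < Real.log (1 + G * (1 - x) ^ 2 / (1 + x)) := Real.log_pos hN1
  set l := Real.log (1 + G * (1 - x) ^ 2 / (1 + x)) with hl
  have hlg : l ≤ G * (1 - x) ^ 2 / (1 + x) := by
    have h := Real.log_le_sub_one_of_pos hNpos
    rw [← hl] at h
    linarith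
  have hpoly : 0 ≤ ((G * (x - 1) * (x + 3) / (1 + x) ^ 2) ^ 2
            - (8 * G / (1 + x) ^ 3) * (1 + G * (1 - x) ^ 2 / (1 + x)))
              * (G * (1 - x) ^ 2 / (1 + x))
          + 2 * (G * (x - 1) * (x + 3) / (1 + x) ^ 2) ^ 2 := by
    have e : ((G * (x - 1) * (x + 3) / (1 + x) ^ 2) ^ 2
            - (8 * G / (1 + x) ^ 3) * (1 + G * (1 - x) ^ 2 / (1 + x)))
              * (G * (1 - x) ^ 2 / (1 + x))
          + 2 * (G * (x - 1) * (x + 3) / (1 + x) ^ 2) ^ 2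
        = (G ^ 2 * (1 - x) ^ 2 *
            (G * (1 - x) ^ 2 * ((x + 3) ^ 2 - 8) + 2 * (1 + x) * ((x + 3) ^ 2 - 4)))
            / (1 + x) ^ 5 := by
      field_simp
      ring
    rw [e]
    have h8 : (0:ℝ) ≤ (x + 3) ^ 2 - 8 := by nlinarith
    have h4 : (0:ℝ) ≤ (x + 3) ^ 2 - 4 := by nlinarith
    have h1 : 0 ≤ G * (1 - x) ^ 2 * ((x + 3) ^ 2 - 8) := by positivity
    have h2 : 0 ≤ 2 * (1 + x) * ((x + 3) ^ 2 - 4) := by positivity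
    positivity
  rcases le_or_gt 0 ((G * (x - 1) * (x + 3) / (1 + x) ^ 2) ^ 2
      - (8 * G / (1 + x) ^ 3) * (1 + G * (1 - x) ^ 2 / (1 + x))) with h | h
  · have h1 := mul_nonneg h hLpos.le
    nlinarith [sq_nonneg (G * (x - 1) * (x + 3) / (1 + x) ^ 2)]
  · have h2 := mul_le_mul_of_nonpos_left hlg h.le
    linarith

end HAux

theorem H_pos_mono_convex (G : ℝ) (hG : 0 < G) :
    (∀ ε ∈ Set.Ico (0 : ℝ) 1,
        0 < 1 / Real.log (1 + G * (1 - ε) ^ 2 / (1 + ε))) ∧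
      MonotoneOn (fun ε : ℝ => 1 / Real.log (1 + G * (1 - ε) ^ 2 / (1 + ε)))
        (Set.Ico (0 : ℝ) 1) ∧
      ConvexOn ℝ (Set.Ico (0 : ℝ) 1)
        (fun ε : ℝ => 1 / Real.log (1 + G * (1 - ε) ^ 2 / (1 + ε))) := by
  have hcont : ContinuousOn (fun ε : ℝ => 1 / Real.log (1 + G * (1 - ε) ^ 2 / (1 + ε)))
      (Set.Ico (0:ℝ) 1) := fun x hx =>
    (HAux.f_hasDerivAt G x hG (by linarith [hx.1]) hx.2).continuousAt.continuousWithinAt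
  have hdiff : DifferentiableOn ℝ
      (fun ε : ℝ => 1 / Real.log (1 + G * (1 - ε) ^ 2 / (1 + ε)))
      (interior (Set.Ico (0:ℝ) 1)) := by
    rw [interior_Ico]
    exact fun x hx =>
      (HAux.f_hasDerivAt G x hG (by linarith [hx.1]) hx.2).differentiableAt.differentiableWithinAt
  have hev : ∀ x ∈ Set.Ioo (0:ℝ) 1,
      deriv (fun ε : ℝ => 1 / Real.log (1 + G * (1 - ε) ^ 2 / (1 + ε))) =ᶠ[nhds x]
        fun x : ℝ => -(G * (x - 1) * (x + 3) / (1 + x) ^ 2) /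
          ((1 + G * (1 - x) ^ 2 / (1 + x)) * Real.log (1 + G * (1 - x) ^ 2 / (1 + x)) ^ 2) := by
    intro x hx
    exact Filter.eventuallyEq_of_mem (isOpen_Ioo.mem_nhds hx)
      (fun y hy => (HAux.f_hasDerivAt G y hG (by linarith [hy.1]) hy.2).deriv)
  have hder2 : ∀ x ∈ Set.Ioo (0:ℝ) 1,
      HasDerivAt (deriv (fun ε : ℝ => 1 / Real.log (1 + G * (1 - ε) ^ 2 / (1 + ε))))
        (Real.log (1 + G * (1 - x) ^ 2 / (1 + x)) *
          (((G * (x - 1) * (x + 3) / (1 + x) ^ 2) ^ 2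
              - (8 * G / (1 + x) ^ 3) * (1 + G * (1 - x) ^ 2 / (1 + x)))
                * Real.log (1 + G * (1 - x) ^ 2 / (1 + x))
            + 2 * (G * (x - 1) * (x + 3) / (1 + x) ^ 2) ^ 2) /
          ((1 + G * (1 - x) ^ 2 / (1 + x)) *
            Real.log (1 + G * (1 - x) ^ 2 / (1 + x)) ^ 2) ^ 2) x := fun x hx =>
    (HAux.F_hasDerivAt G x hG (by linarith [hx.1]) hx.2).congr_of_eventuallyEq (hev x hx)
  refine ⟨?_, ?_, ?_⟩
  · intro ε hε
    exact one_div_pos.mpr (Real.log_pos (HAux.N_gt_one G ε hG (by linarith [hε.1]) hε.2))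
  · apply monotoneOn_of_deriv_nonneg (convex_Ico 0 1) hcont hdiff
    rw [interior_Ico]
    intro x hx
    rw [(HAux.f_hasDerivAt G x hG (by linarith [hx.1]) hx.2).deriv]
    have hN1 : 1 < 1 + G * (1 - x) ^ 2 / (1 + x) :=
      HAux.N_gt_one G x hG (by linarith [hx.1]) hx.2
    apply div_nonneg
    · have h1 : G * (x - 1) * (x + 3) ≤ 0 := by
        nlinarith [mul_nonneg (mul_nonneg hG.le (show (0:ℝ) ≤ 1 - x by linarith [hx.2]))
          (show (0:ℝ) ≤ x + 3 by linarith [hx.1])]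
      have h2 : (0:ℝ) < (1 + x) ^ 2 := by nlinarith [hx.1]
      have := div_nonpos_of_nonpos_of_nonneg h1 h2.le
      linarith
    · exact mul_nonneg (by linarith) (sq_nonneg _)
  · apply convexOn_of_deriv2_nonneg (convex_Ico 0 1) hcont hdiff
    · rw [interior_Ico]
      exact fun x hx => (hder2 x hx).differentiableAt.differentiableWithinAt
    · rw [interior_Ico]
      intro x hx
      have h2 : deriv^[2] (fun ε : ℝ => 1 / Real.log (1 + G * (1 - ε) ^ 2 / (1 + ε))) x
          = deriv (deriv (fun ε : ℝ => 1 / Real.log (1 + G * (1 - ε) ^ 2 / (1 + ε)))) x := rfl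
      rw [h2, (hder2 x hx).deriv]
      have hN1 : 1 < 1 + G * (1 - x) ^ 2 / (1 + x) :=
        HAux.N_gt_one G x hG (by linarith [hx.1]) hx.2
      have hLpos : 0 < Real.log (1 + G * (1 - x) ^ 2 / (1 + x)) := Real.log_pos hN1
      apply div_nonneg
      · exact mul_nonneg hLpos.le (HAux.key_nonneg G x hG hx.1.le hx.2)
      · exact sq_nonneg _
end

section
/- For all G > 0: 5G/(1+G) + ln(1+G) - (ln(1+G))²/ln(1 + G/6) ≥ 0. -/
noncomputable def Ffun : ℝ → ℝ := fun G =>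
  5 * G / (1 + G) + Real.log (1 + G) - (Real.log (1 + G)) ^ 2 / Real.log (1 + G / 6)

lemma Ffun_hasDerivAt (x : ℝ) (hx : 0 < x) :
    HasDerivAt Ffun
      (5 / (1 + x) ^ 2 + 1 / (1 + x)
        - ((2 * Real.log (1 + x) * (1 / (1 + x)) * Real.log (1 + x / 6)
            - (Real.log (1 + x)) ^ 2 * (1 / (6 + x))) / (Real.log (1 + x / 6)) ^ 2)) x := by
  have h1 : (0:ℝ) < 1 + x := by linarith
  have h6 : (0:ℝ) < 1 + x / 6 := by linarith
  have hb : Real.log (1 + x / 6) ≠ 0 := by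
    have := Real.log_pos (by linarith : (1:ℝ) < 1 + x / 6); linarith
  have ha1 : HasDerivAt (fun G : ℝ => 1 + G) 1 x := by
    simpa using (hasDerivAt_id x).const_add 1
  have ha6 : HasDerivAt (fun G : ℝ => 1 + G / 6) (1 / 6) x := by
    simpa using ((hasDerivAt_id x).div_const 6).const_add 1
  have hla : HasDerivAt (fun G : ℝ => Real.log (1 + G)) (1 / (1 + x)) x := by
    have := (Real.hasDerivAt_log h1.ne').comp x ha1
    exact this.congr_deriv (by simp [one_div])
  have hlb : HasDerivAt (fun G : ℝ => Real.log (1 + G / 6)) (1 / (6 + x)) x := by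
    have h := (Real.hasDerivAt_log h6.ne').comp x ha6
    have h' : HasDerivAt (fun G : ℝ => Real.log (1 + G / 6)) ((1 + x / 6)⁻¹ * (1 / 6)) x := by
      exact h
    convert h' using 1
    field_simp
  have hfrac : HasDerivAt (fun G : ℝ => 5 * G / (1 + G)) (5 / (1 + x) ^ 2) x := by
    have hnum : HasDerivAt (fun G : ℝ => 5 * G) 5 x := by
      simpa using (hasDerivAt_id x).const_mul 5
    exact (hnum.div ha1 h1.ne').congr_deriv (by ring)
  have hsq : HasDerivAt (fun G : ℝ => (Real.log (1 + G)) ^ 2)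
      (2 * Real.log (1 + x) * (1 / (1 + x))) x := by
    have := hla.pow 2
    ring_nf at this ⊢
    exact this.congr_deriv (by ring)
  have hdiv := hsq.div hlb hb
  have := (hfrac.add hla).sub hdiv
  exact this

lemma Ffun_deriv_nonneg (x : ℝ) (hx : 0 < x) : 0 ≤ deriv Ffun x := by
  rw [(Ffun_hasDerivAt x hx).deriv]
  set a := Real.log (1 + x) with ha
  set b := Real.log (1 + x / 6) with hb
  have h1 : (0:ℝ) < 1 + x := by linarith
  have h6 : (0:ℝ) < 6 + x := by linarith
  have hbpos : 0 < b := Real.log_pos (by linarith : (1:ℝ) < 1 + x / 6)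
  have key : 5 / (1 + x) ^ 2 + 1 / (1 + x)
      - ((2 * a * (1 / (1 + x)) * b - a ^ 2 * (1 / (6 + x))) / b ^ 2)
      = ((1 + x) * a - (6 + x) * b) ^ 2 / ((1 + x) ^ 2 * (6 + x) * b ^ 2) := by
    field_simp
    ring
  rw [key]
  positivity

theorem F_nonneg (G : ℝ) (hG : 0 < G) :
    5 * G / (1 + G) + Real.log (1 + G)
      - (Real.log (1 + G)) ^ 2 / Real.log (1 + G / 6) ≥ 0 := by
  -- F is monotone on [ε, ∞) for every ε > 0
  have mono : ∀ ε : ℝ, 0 < ε → MonotoneOn Ffun (Set.Ici ε) := by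
    intro ε hε
    have hint : interior (Set.Ici ε) = Set.Ioi ε := interior_Ici
    have hdiff : DifferentiableOn ℝ Ffun (interior (Set.Ici ε)) := by
      rw [hint]
      intro x hx
      exact (Ffun_hasDerivAt x (hε.trans hx)).differentiableAt.differentiableWithinAt
    apply monotoneOn_of_deriv_nonneg (convex_Ici ε) ?_ hdiff ?_
    · intro x hx
      exact (Ffun_hasDerivAt x (hε.trans_le hx)).differentiableAt.continuousAt.continuousWithinAt
    · intro x hx
      rw [hint] at hx
      exact Ffun_deriv_nonneg x (hε.trans hx)
  -- lower bound F ε ≥ -7 ε for small ε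
  have lower : ∀ ε : ℝ, 0 < ε → ε ≤ 1 → Ffun ε ≥ -7 * ε := by
    intro ε hε hε1
    have h1 : (0:ℝ) < 1 + ε := by linarith
    have ha : Real.log (1 + ε) ≤ ε := by
      have := Real.log_le_sub_one_of_pos h1
      linarith
    have ha0 : 0 ≤ Real.log (1 + ε) := Real.log_nonneg (by linarith)
    have hb : Real.log (1 + ε / 6) ≥ ε / 7 := by
      have h6 : (0:ℝ) < 1 + ε / 6 := by linarith
      have := Real.one_sub_inv_le_log_of_pos h6
      have e : 1 - (1 + ε / 6)⁻¹ = (ε / 6) / (1 + ε / 6) := by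
        field_simp
        ring
      rw [e] at this
      have : (ε / 6) / (1 + ε / 6) ≥ ε / 7 := by
        rw [ge_iff_le, div_le_div_iff₀ (by norm_num) (by linarith)]
        nlinarith
      linarith
    have hbpos : 0 < Real.log (1 + ε / 6) := by linarith
    have hq : (Real.log (1 + ε)) ^ 2 / Real.log (1 + ε / 6) ≤ 7 * ε := by
      rw [div_le_iff₀ hbpos]
      nlinarith [sq_nonneg (Real.log (1 + ε))]
    have hfrac : 0 ≤ 5 * ε / (1 + ε) := by positivity
    simp only [Ffun]
    linarith
  -- conclude
  have main : Ffun G ≥ 0 := by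
    by_contra h
    push_neg at h
    set ε := min (G / 2) (min 1 (-Ffun G / 14)) with hεdef
    have hFneg : Ffun G < 0 := h
    have hεpos : 0 < ε := by
      apply lt_min (by linarith) (lt_min one_pos (by linarith))
    have hε1 : ε ≤ 1 := le_trans (min_le_right _ _) (min_le_left _ _)
    have hε14 : ε ≤ -Ffun G / 14 := le_trans (min_le_right _ _) (min_le_right _ _)
    have hεG : ε ≤ G := le_trans (min_le_left _ _) (by linarith)
    have h1 := mono ε hεpos (Set.self_mem_Ici) (Set.mem_Ici.mpr hεG) hεG
    have h2 := lower ε hεpos hε1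
    linarith
  simpa [Ffun] using main
end

section
/- The derivative of F(G) = 5G/(1+G) + ln(1+G) - (ln(1+G))²/ln(1+G/6) for G > 0 equals ((1+G)ln(1+G) - (6+G)ln(1+G/6))² / ((1+G)²(6+G)(ln(1+G/6))²), and in particular is nonnegative. -/
theorem F_deriv (G : ℝ) (hG : 0 < G) :
    HasDerivAt
        (fun G : ℝ => 5 * G / (1 + G) + Real.log (1 + G)
          - (Real.log (1 + G)) ^ 2 / Real.log (1 + G / 6))
        (((1 + G) * Real.log (1 + G) - (6 + G) * Real.log (1 + G / 6)) ^ 2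
          / ((1 + G) ^ 2 * (6 + G) * (Real.log (1 + G / 6)) ^ 2)) G ∧
      0 ≤ ((1 + G) * Real.log (1 + G) - (6 + G) * Real.log (1 + G / 6)) ^ 2
          / ((1 + G) ^ 2 * (6 + G) * (Real.log (1 + G / 6)) ^ 2) := by
  have ha : (0:ℝ) < 1 + G := by linarith
  have hb : (0:ℝ) < 6 + G := by linarith
  have ha6 : (0:ℝ) < 1 + G / 6 := by linarith
  have hM : Real.log (1 + G / 6) ≠ 0 := by
    have : 0 < Real.log (1 + G / 6) := Real.log_pos (by linarith)
    linarith
  have hf : HasDerivAt (fun x : ℝ => 5 * x) 5 G := by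
    simpa using (hasDerivAt_id G).const_mul (5:ℝ)
  have hg : HasDerivAt (fun x : ℝ => 1 + x) 1 G := by
    simpa using (hasDerivAt_id G).const_add (1:ℝ)
  have h1 := hf.div hg ha.ne'
  have hlog1 : HasDerivAt (fun x : ℝ => Real.log (1 + x)) (1 / (1 + G)) G := hg.log ha.ne'
  have hg6 : HasDerivAt (fun x : ℝ => 1 + x / 6) (1 / 6) G := by
    simpa using ((hasDerivAt_id G).div_const (6:ℝ)).const_add (1:ℝ)
  have hlog6 := hg6.log ha6.ne'
  have hnum := hlog1.pow 2
  have hratio := hnum.div hlog6 hM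
  have htot := (h1.add hlog1).sub hratio
  constructor
  · refine htot.congr_deriv ?_
    simp only [Pi.pow_apply]
    set L := Real.log (1 + G) with hL
    set M := Real.log (1 + G / 6) with hMdef
    have h6 : (1:ℝ) + G / 6 = (6 + G) / 6 := by ring
    rw [h6]
    field_simp
    ring
  · apply div_nonneg (sq_nonneg _)
    positivity
end

section
/- Let X₁, X₂, ... be i.i.d. N(μ, σ²) with σ > 0, and for ε > 0 define the events A_{j,k} = {X̄_j + S(j)·√(k^{2/j} - 1) < μ - ε} where X̄_j is the sample mean and S²(j) = (1/j)∑_{t=1}^j (X_t - X̄_j)². Then k · P(A_{j,k} for some 2 ≤ j ≤ k) → ∞ as k → ∞; i.e., this probability is not o(1/k). -/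
open ProbabilityTheory MeasureTheory Filter Real
open scoped NNReal ENNReal

lemma gauss_lb (μ : ℝ) {v : ℝ≥0} (hv : 0 < v) {c s t R : ℝ}
    (hc : c = (Real.sqrt (2 * Real.pi * v))⁻¹ * Real.exp (-(R ^ 2) / (2 * v)))
    (hR : ∀ x ∈ Set.Ico s t, |x - μ| ≤ R) :
    ENNReal.ofReal (c * (t - s)) ≤ gaussianReal μ v (Set.Ico s t) := by
  have hc0 : 0 ≤ c := by
    rw [hc]; positivity
  have hpdf : ∀ x ∈ Set.Ico s t, ENNReal.ofReal c ≤ gaussianPDF μ v x := by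
    intro x hx
    refine ENNReal.ofReal_le_ofReal ?_
    rw [hc, gaussianPDFReal]
    refine mul_le_mul_of_nonneg_left ?_ (by positivity)
    refine Real.exp_le_exp.2 ?_
    have h1 : (x - μ) ^ 2 ≤ R ^ 2 := by
      have := hR x hx
      have h0 : (0:ℝ) ≤ |x - μ| := abs_nonneg _
      calc (x - μ) ^ 2 = |x - μ| ^ 2 := (sq_abs _).symm
        _ ≤ R ^ 2 := by nlinarith
    have h2v : (0:ℝ) < 2 * v := by positivity
    rw [div_le_div_iff_of_pos_right h2v]
    linarith
  rw [gaussianReal_apply μ hv.ne' _]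
  calc ENNReal.ofReal (c * (t - s)) = ENNReal.ofReal c * ENNReal.ofReal (t - s) :=
        ENNReal.ofReal_mul hc0
    _ = ENNReal.ofReal c * volume (Set.Ico s t) := by rw [Real.volume_Ico]
    _ = ∫⁻ _ in Set.Ico s t, ENNReal.ofReal c := (setLIntegral_const _ _).symm
    _ ≤ ∫⁻ x in Set.Ico s t, gaussianPDF μ v x :=
        setLIntegral_mono (measurable_gaussianPDF μ v) hpdf

set_option maxHeartbeats 1000000 in
theorem conjecture_false
    {Ω : Type*} [MeasureSpace Ω] (P : Measure Ω) [IsProbabilityMeasure P]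
    (X : ℕ → Ω → ℝ) (μ : ℝ) (v : ℝ≥0) (hv : 0 < v)
    (hindep : iIndepFun X P)
    (hdist : ∀ t, Measure.map (X t) P = gaussianReal μ v)
    (ε : ℝ) (hε : 0 < ε) :
    Tendsto (fun k : ℕ => (k : ℝ) *
        (P (⋃ j ∈ Finset.Icc 2 k,
            {ω | (∑ t ∈ Finset.range j, X t ω) / j
              + Real.sqrt ((∑ t ∈ Finset.range j,
                  (X t ω - (∑ t' ∈ Finset.range j, X t' ω) / j) ^ 2) / j)
                * Real.sqrt ((k : ℝ) ^ ((2 : ℝ) / (j : ℝ)) - 1) < μ - ε})).toReal)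
      atTop atTop := by
  -- notation
  set a : ℝ := μ - ε - 4 with ha
  clear_value a
  set c : ℝ := (Real.sqrt (2 * Real.pi * v))⁻¹ * Real.exp (-((ε + 5) ^ 2) / (2 * v)) with hcdef
  have hc0 : 0 < c := by positivity
  clear_value c
  -- aemeasurability
  have hXae : ∀ t, AEMeasurable (X t) P := by
    intro t
    by_contra h
    have h0 := Measure.map_of_not_aemeasurable h
    rw [hdist t] at h0
    exact (IsProbabilityMeasure.ne_zero (gaussianReal μ v)) h0
  have hmeas : ∀ t (I : Set ℝ), MeasurableSet I → P (X t ⁻¹' I) = gaussianReal μ v I := by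
    intro t I hI
    rw [← hdist t, Measure.map_apply_of_aemeasurable (hXae t) hI]
  -- the lower bound function
  have hlow : Tendsto (fun k : ℕ => c ^ 3 * (k : ℝ) ^ ((1:ℝ)/3)) atTop atTop := by
    apply Tendsto.const_mul_atTop (by positivity)
    exact (tendsto_rpow_atTop (by norm_num)).comp tendsto_natCast_atTop_atTop
  refine tendsto_atTop_mono' atTop ?_ hlow
  filter_upwards [eventually_ge_atTop 8] with k hk8
  -- basic facts about k
  have hk8R : (8:ℝ) ≤ (k:ℝ) := by exact_mod_cast hk8
  have hk0 : (0:ℝ) < (k:ℝ) := by linarith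
  have hcbrt2 : (2:ℝ) ≤ (k:ℝ) ^ ((1:ℝ)/3) := by
    have h8 : (8:ℝ) ^ ((1:ℝ)/3) = 2 := by
      rw [show (8:ℝ) = 2 ^ (3:ℝ) by norm_num, ← Real.rpow_mul (by norm_num)]
      norm_num
    rw [← h8]
    exact Real.rpow_le_rpow (by norm_num) hk8R (by norm_num)
  set N : ℕ := ⌊(k:ℝ) ^ ((1:ℝ)/3)⌋₊ with hNdef
  have hN2 : 2 ≤ N := Nat.le_floor (by exact_mod_cast hcbrt2)
  have hN1 : (1:ℝ) ≤ (N:ℝ) := by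
    have : (2:ℕ) ≤ N := hN2
    exact_mod_cast le_trans (by norm_num) this
  have hN0 : (0:ℝ) < (N:ℝ) := by linarith
  have hNle : (N:ℝ) ≤ (k:ℝ) ^ ((1:ℝ)/3) := Nat.floor_le (by positivity)
  have hNge : (k:ℝ) ^ ((1:ℝ)/3) ≤ 2 * (N:ℝ) := by
    have := Nat.lt_floor_add_one ((k:ℝ) ^ ((1:ℝ)/3))
    rw [← hNdef] at this
    linarith
  clear_value N
  set δ : ℝ := 1 / (N:ℝ) with hδdef
  have hδ0 : 0 < δ := by positivity
  have hδk : δ * (k:ℝ) ^ ((1:ℝ)/3) ≤ 2 := by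
    rw [hδdef, div_mul_eq_mul_div, one_mul, div_le_iff₀ hN0]
    linarith
  have hNδ : (N:ℝ) * δ = 1 := by
    rw [hδdef]; field_simp
  clear_value δ
  -- the boxes
  set I : ℕ → Set ℝ := fun i => Set.Ico (a + i * δ) (a + i * δ + δ) with hIdef
  set F : ℕ → Set Ω := fun i => ⋂ t ∈ Finset.range 3, X t ⁻¹' I i with hFdef
  -- each box is inside [a, a+1]
  have hIsub : ∀ i ∈ Finset.range N, ∀ x ∈ I i, a ≤ x ∧ x < a + 1 := by
    intro i hi x hx
    rw [hIdef] at hx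
    obtain ⟨hx1, hx2⟩ := hx
    have hiN : (i:ℝ) + 1 ≤ (N:ℝ) := by
      have : i + 1 ≤ N := Finset.mem_range.1 hi
      exact_mod_cast this
    have h1 : (i:ℝ) * δ + δ ≤ (N:ℝ) * δ := by nlinarith
    constructor
    · nlinarith
    · nlinarith [hNδ]
  -- probability of a box
  have hboxP : ∀ i ∈ Finset.range N, ENNReal.ofReal ((c * δ) ^ 3) ≤ P (F i) := by
    intro i hi
    have hprod : P (F i) = ∏ t ∈ Finset.range 3, P (X t ⁻¹' I i) := by
      rw [hFdef]
      exact hindep.measure_inter_preimage_eq_mul (Finset.range 3)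
        (sets := fun _ => I i) (fun t _ => measurableSet_Ico)
    have hone : ∀ t ∈ Finset.range 3, P (X t ⁻¹' I i) = gaussianReal μ v (I i) := fun t _ =>
      hmeas t (I i) measurableSet_Ico
    rw [hprod, Finset.prod_congr rfl hone, Finset.prod_const, Finset.card_range]
    have hlb : ENNReal.ofReal (c * δ) ≤ gaussianReal μ v (I i) := by
      have h := gauss_lb μ hv (c := c) (s := a + i * δ) (t := a + i * δ + δ)
        (R := ε + 5) hcdef ?_
      · simpa using h
      · intro x hx
        obtain ⟨hx1, hx2⟩ := hIsub i hi x hx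
        rw [abs_le]
        rw [ha] at hx1 hx2
        constructor <;> linarith
    calc ENNReal.ofReal ((c * δ) ^ 3) = ENNReal.ofReal (c * δ) ^ 3 := by
          rw [ENNReal.ofReal_pow (by positivity)]
      _ ≤ gaussianReal μ v (I i) ^ 3 := pow_le_pow_left' hlb 3
  -- the boxes are pairwise a.e. disjoint
  have hdisj : Set.Pairwise (↑(Finset.range N)) (Function.onFun Disjoint F) := by
    intro i _ j _ hij
    have key : ∀ i j : ℕ, i < j → Disjoint (F i) (F j) := by
      intro i j hij
      have hsub : ∀ m, F m ⊆ X 0 ⁻¹' I m := by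
        intro m ω hω
        rw [hFdef] at hω
        exact Set.mem_iInter₂.1 hω 0 (by norm_num)
      refine Set.disjoint_left.2 fun ω h1 h2 => ?_
      have m1 := hsub i h1
      have m2 := hsub j h2
      rw [hIdef] at m1 m2
      have hij1 : (i:ℝ) + 1 ≤ (j:ℝ) := by exact_mod_cast hij
      obtain ⟨a1, b1⟩ := m1
      obtain ⟨a2, b2⟩ := m2
      nlinarith
    rcases lt_or_gt_of_ne hij with h | h
    · exact key i j h
    · exact (key j i h).symm
  -- the boxes are null measurable
  have hnm : ∀ i ∈ Finset.range N, NullMeasurableSet (F i) P := by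
    intro i _
    rw [hFdef]
    exact Finset.nullMeasurableSet_biInter _ fun t _ =>
      (hXae t).nullMeasurableSet_preimage measurableSet_Ico
  -- each box implies the event for j = 3
  set target := ⋃ j ∈ Finset.Icc 2 k,
            {ω | (∑ t ∈ Finset.range j, X t ω) / j
              + Real.sqrt ((∑ t ∈ Finset.range j,
                  (X t ω - (∑ t' ∈ Finset.range j, X t' ω) / j) ^ 2) / j)
                * Real.sqrt ((k : ℝ) ^ ((2 : ℝ) / (j : ℝ)) - 1) < μ - ε}
    with htarget
  have hsubtarget : ∀ i ∈ Finset.range N, F i ⊆ target := by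
    intro i hi
    have h3mem : (3:ℕ) ∈ Finset.Icc 2 k := Finset.mem_Icc.2 ⟨by norm_num, by omega⟩
    intro ω hω
    rw [hFdef] at hω
    have hX : ∀ t ∈ Finset.range 3, X t ω ∈ I i := fun t ht =>
      Set.mem_iInter₂.1 hω t ht
    set x := a + i * δ with hx
    have h0 := hX 0 (by norm_num)
    have h1 := hX 1 (by norm_num)
    have h2 := hX 2 (by norm_num)
    rw [hIdef, Set.mem_Ico] at h0 h1 h2
    refine Set.mem_biUnion h3mem ?_
    simp only [Set.mem_setOf_eq]
    have hsum3 : (∑ t ∈ Finset.range 3, X t ω) = X 0 ω + X 1 ω + X 2 ω := by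
      rw [Finset.sum_range_succ, Finset.sum_range_succ, Finset.sum_range_one]
    set m := (∑ t ∈ Finset.range 3, X t ω) / (3:ℕ) with hm
    have hm3 : ((3:ℕ):ℝ) = 3 := by norm_num
    have hmlb : x ≤ m := by
      rw [hm, hsum3, hm3, le_div_iff₀ (by norm_num)]
      linarith [h0.1, h1.1, h2.1]
    have hmub : m < x + δ := by
      rw [hm, hsum3, hm3, div_lt_iff₀ (by norm_num)]
      linarith [h0.2, h1.2, h2.2]
    -- variance bound
    have hdev : ∀ t ∈ Finset.range 3, (X t ω - m) ^ 2 ≤ δ ^ 2 := by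
      intro t ht
      have h := hX t ht
      rw [hIdef, Set.mem_Ico] at h
      have h1' : -δ ≤ X t ω - m := by nlinarith [h.1]
      have h2' : X t ω - m ≤ δ := by nlinarith [h.2]
      nlinarith
    have hvar : (∑ t ∈ Finset.range 3, (X t ω - m) ^ 2) / (3:ℕ) ≤ δ ^ 2 := by
      rw [hm3, div_le_iff₀ (by norm_num)]
      have h := Finset.sum_le_sum hdev
      simp only [Finset.sum_const, Finset.card_range, nsmul_eq_mul] at h
      push_cast at h
      linarith
    have hS : Real.sqrt ((∑ t ∈ Finset.range 3, (X t ω - m) ^ 2) / (3:ℕ)) ≤ δ := by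
      calc Real.sqrt ((∑ t ∈ Finset.range 3, (X t ω - m) ^ 2) / (3:ℕ))
          ≤ Real.sqrt (δ ^ 2) := Real.sqrt_le_sqrt hvar
        _ = δ := by rw [Real.sqrt_sq hδ0.le]
    -- sqrt(k^{2/3}-1) ≤ k^{1/3}
    have hsqrtk : Real.sqrt ((k:ℝ) ^ ((2:ℝ)/((3:ℕ):ℝ)) - 1) ≤ (k:ℝ) ^ ((1:ℝ)/3) := by
      have heq : ((k:ℝ) ^ ((1:ℝ)/3)) ^ 2 = (k:ℝ) ^ ((2:ℝ)/((3:ℕ):ℝ)) := by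
        rw [← Real.rpow_natCast ((k:ℝ) ^ ((1:ℝ)/3)) 2, ← Real.rpow_mul hk0.le]
        norm_num
      calc Real.sqrt ((k:ℝ) ^ ((2:ℝ)/((3:ℕ):ℝ)) - 1)
          ≤ Real.sqrt (((k:ℝ) ^ ((1:ℝ)/3)) ^ 2) := Real.sqrt_le_sqrt (by rw [heq]; linarith)
        _ = (k:ℝ) ^ ((1:ℝ)/3) := Real.sqrt_sq (by positivity)
    have hprodle : Real.sqrt ((∑ t ∈ Finset.range 3, (X t ω - m) ^ 2) / (3:ℕ))
        * Real.sqrt ((k:ℝ) ^ ((2:ℝ)/((3:ℕ):ℝ)) - 1) ≤ 2 := by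
      calc Real.sqrt ((∑ t ∈ Finset.range 3, (X t ω - m) ^ 2) / (3:ℕ))
            * Real.sqrt ((k:ℝ) ^ ((2:ℝ)/((3:ℕ):ℝ)) - 1)
          ≤ δ * (k:ℝ) ^ ((1:ℝ)/3) :=
            mul_le_mul hS hsqrtk (Real.sqrt_nonneg _) hδ0.le
        _ ≤ 2 := hδk
    -- conclude
    have hxub : x + δ ≤ a + 1 := by
      have hiN : (i:ℝ) + 1 ≤ (N:ℝ) := by
        have : i + 1 ≤ N := Finset.mem_range.1 hi
        exact_mod_cast this
      rw [hx]
      nlinarith [hNδ]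
    have : m + Real.sqrt ((∑ t ∈ Finset.range 3, (X t ω - m) ^ 2) / (3:ℕ))
        * Real.sqrt ((k:ℝ) ^ ((2:ℝ)/((3:ℕ):ℝ)) - 1) < (x + δ) + 2 := by
      linarith
    rw [ha] at hxub
    linarith
  -- assemble: lower bound on the probability
  have hUsub : (⋃ i ∈ Finset.range N, F i) ⊆ target :=
    Set.iUnion₂_subset hsubtarget
  have hsum : P (⋃ i ∈ Finset.range N, F i) = ∑ i ∈ Finset.range N, P (F i) :=
    measure_biUnion_finset₀ (fun i hi j hj hij => (hdisj hi hj hij).aedisjoint) hnm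
  have hPlb : ENNReal.ofReal ((N:ℝ) * (c * δ) ^ 3) ≤ P target := by
    calc ENNReal.ofReal ((N:ℝ) * (c * δ) ^ 3)
        = (N:ℝ≥0∞) * ENNReal.ofReal ((c * δ) ^ 3) := by
          rw [ENNReal.ofReal_mul (by positivity), ENNReal.ofReal_natCast]
      _ = ∑ _i ∈ Finset.range N, ENNReal.ofReal ((c * δ) ^ 3) := by
          rw [Finset.sum_const, Finset.card_range, nsmul_eq_mul]
      _ ≤ ∑ i ∈ Finset.range N, P (F i) := Finset.sum_le_sum hboxP
      _ = P (⋃ i ∈ Finset.range N, F i) := hsum.symm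
      _ ≤ P target := measure_mono hUsub
  have hreal : (N:ℝ) * (c * δ) ^ 3 ≤ (P target).toReal := by
    have := ENNReal.toReal_mono (measure_ne_top P target) hPlb
    rwa [ENNReal.toReal_ofReal (by positivity)] at this
  -- final arithmetic
  have hfinal : c ^ 3 * (k:ℝ) ^ ((1:ℝ)/3) ≤ (k:ℝ) * ((N:ℝ) * (c * δ) ^ 3) := by
    have hNsq : (N:ℝ) ^ 2 ≤ ((k:ℝ) ^ ((1:ℝ)/3)) ^ 2 := by
      nlinarith [hNle, hN0.le]
    have hkk : (k:ℝ) ^ ((1:ℝ)/3) * ((k:ℝ) ^ ((1:ℝ)/3)) ^ 2 = (k:ℝ) := by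
      rw [← Real.rpow_natCast ((k:ℝ) ^ ((1:ℝ)/3)) 2, ← Real.rpow_mul hk0.le,
        ← Real.rpow_add hk0]
      norm_num
    have hkey : (k:ℝ) ^ ((1:ℝ)/3) * (N:ℝ) ^ 2 ≤ (k:ℝ) := by
      calc (k:ℝ) ^ ((1:ℝ)/3) * (N:ℝ) ^ 2
          ≤ (k:ℝ) ^ ((1:ℝ)/3) * ((k:ℝ) ^ ((1:ℝ)/3)) ^ 2 :=
            mul_le_mul_of_nonneg_left hNsq (by positivity)
        _ = (k:ℝ) := hkk
    have hδN : δ = 1 / (N:ℝ) := hδdef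
    have hrw : (k:ℝ) * ((N:ℝ) * (c * δ) ^ 3) = c ^ 3 * ((k:ℝ) / (N:ℝ) ^ 2) := by
      rw [hδN]
      field_simp
    rw [hrw]
    have : (k:ℝ) ^ ((1:ℝ)/3) ≤ (k:ℝ) / (N:ℝ) ^ 2 := by
      rw [le_div_iff₀ (by positivity)]
      exact hkey
    nlinarith [pow_pos hc0 3]
  calc c ^ 3 * (k:ℝ) ^ ((1:ℝ)/3) ≤ (k:ℝ) * ((N:ℝ) * (c * δ) ^ 3) := hfinal
    _ ≤ (k:ℝ) * (P target).toReal :=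
      mul_le_mul_of_nonneg_left hreal (by positivity)
end
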